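/- arXiv:2301.06069 — 10 statements merged into one kernel-verified Lean document; each statement's English description precedes it below -/
import Mathlib

section
/- For all complex n×n matrices C and D, the superoperators satisfy the commutation relations [F̂(C), L̂(D)] = −L̂(DC), [B̂(C), L̂(D)] = −L̂(CD), [F̂(C), Ĝ(D)] = Ĝ(CD), and [B̂(C), Ĝ(D)] = Ĝ(DC), where [X,Y] = XY − YX denotes the commutator of linear maps on End(F) and DC, CD denote matrix products. -/
open ContinuousLinearMap in
/-- `Lhat c A ρ = Σ_{j,k} A j k • (c k * ρ * (c j)†)`. -/
noncomputable def Lhat {F : Type*} [NormedAddCommGroup F] [InnerProductSpace ℂ F]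
    [FiniteDimensional ℂ F] {n : ℕ} (c : Fin n → F →L[ℂ] F)
    (A : Matrix (Fin n) (Fin n) ℂ) : (F →L[ℂ] F) →L[ℂ] (F →L[ℂ] F) :=
  ∑ j, ∑ k, A j k • mulLeftRight ℂ (F →L[ℂ] F) (c k) (adjoint (c j))

open ContinuousLinearMap in
/-- `Ghat c A ρ = Σ_{j,k} A j k • ((c j)† * ρ * c k)`. -/
noncomputable def Ghat {F : Type*} [NormedAddCommGroup F] [InnerProductSpace ℂ F]
    [FiniteDimensional ℂ F] {n : ℕ} (c : Fin n → F →L[ℂ] F)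
    (A : Matrix (Fin n) (Fin n) ℂ) : (F →L[ℂ] F) →L[ℂ] (F →L[ℂ] F) :=
  ∑ j, ∑ k, A j k • mulLeftRight ℂ (F →L[ℂ] F) (adjoint (c j)) (c k)

open ContinuousLinearMap in
/-- The quadratic form `(c, A c) = Σ_{j,k} A j k • ((c j)† * c k)`. -/
noncomputable def quadOp {F : Type*} [NormedAddCommGroup F] [InnerProductSpace ℂ F]
    [FiniteDimensional ℂ F] {n : ℕ} (c : Fin n → F →L[ℂ] F)
    (A : Matrix (Fin n) (Fin n) ℂ) : F →L[ℂ] F :=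
  ∑ j, ∑ k, A j k • (adjoint (c j) * c k)

open ContinuousLinearMap in
/-- `Fhat c A ρ = (c, A c) * ρ`. -/
noncomputable def Fhat {F : Type*} [NormedAddCommGroup F] [InnerProductSpace ℂ F]
    [FiniteDimensional ℂ F] {n : ℕ} (c : Fin n → F →L[ℂ] F)
    (A : Matrix (Fin n) (Fin n) ℂ) : (F →L[ℂ] F) →L[ℂ] (F →L[ℂ] F) :=
  mul ℂ (F →L[ℂ] F) (quadOp c A)

open ContinuousLinearMap in
/-- `Bhat c A ρ = ρ * (c, A c)`. -/
noncomputable def Bhat {F : Type*} [NormedAddCommGroup F] [InnerProductSpace ℂ F]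
    [FiniteDimensional ℂ F] {n : ℕ} (c : Fin n → F →L[ℂ] F)
    (A : Matrix (Fin n) (Fin n) ℂ) : (F →L[ℂ] F) →L[ℂ] (F →L[ℂ] F) :=
  mulLeftRight ℂ (F →L[ℂ] F) 1 (quadOp c A)

set_option synthInstance.maxHeartbeats 1000000
set_option maxHeartbeats 1000000

section Aux
open ContinuousLinearMap
variable {F : Type*} [NormedAddCommGroup F] [InnerProductSpace ℂ F] [FiniteDimensional ℂ F]

private lemma mlr_comp (a b a' b' : F →L[ℂ] F) :
    mulLeftRight ℂ (F →L[ℂ] F) a b * mulLeftRight ℂ (F →L[ℂ] F) a' b'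
      = mulLeftRight ℂ (F →L[ℂ] F) (a * a') (b' * b) := by
  ext ρ; simp [mulLeftRight_apply, mul_assoc]

private lemma mul_eq_mlr (a : F →L[ℂ] F) :
    mul ℂ (F →L[ℂ] F) a = mulLeftRight ℂ (F →L[ℂ] F) a 1 := by
  ext ρ; simp [mulLeftRight_apply]

private lemma mlr_sub_left (a a' b : F →L[ℂ] F) :
    mulLeftRight ℂ (F →L[ℂ] F) a b - mulLeftRight ℂ (F →L[ℂ] F) a' b
      = mulLeftRight ℂ (F →L[ℂ] F) (a - a') b := by
  ext ρ; simp [mulLeftRight_apply, sub_mul]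

private lemma mlr_sub_right (a b b' : F →L[ℂ] F) :
    mulLeftRight ℂ (F →L[ℂ] F) a b - mulLeftRight ℂ (F →L[ℂ] F) a b'
      = mulLeftRight ℂ (F →L[ℂ] F) a (b - b') := by
  ext ρ; simp [mulLeftRight_apply, mul_sub, sub_mul]

private lemma mlr_neg_left (a b : F →L[ℂ] F) :
    mulLeftRight ℂ (F →L[ℂ] F) (-a) b = - mulLeftRight ℂ (F →L[ℂ] F) a b := by
  ext ρ; simp [mulLeftRight_apply]

private lemma mlr_neg_right (a b : F →L[ℂ] F) :
    mulLeftRight ℂ (F →L[ℂ] F) a (-b) = - mulLeftRight ℂ (F →L[ℂ] F) a b := by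
  ext ρ; simp [mulLeftRight_apply]

private lemma mlr_smul_left (x : ℂ) (a b : F →L[ℂ] F) :
    mulLeftRight ℂ (F →L[ℂ] F) (x • a) b = x • mulLeftRight ℂ (F →L[ℂ] F) a b := by
  ext ρ; simp [mulLeftRight_apply, smul_mul_assoc]

private lemma mlr_smul_right (x : ℂ) (a b : F →L[ℂ] F) :
    mulLeftRight ℂ (F →L[ℂ] F) a (x • b) = x • mulLeftRight ℂ (F →L[ℂ] F) a b := by
  ext ρ; simp [mulLeftRight_apply, smul_mul_assoc, mul_smul_comm]

private lemma mlr_sum_left {ι : Type*} (s : Finset ι) (f : ι → F →L[ℂ] F) (b : F →L[ℂ] F) :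
    mulLeftRight ℂ (F →L[ℂ] F) (∑ i ∈ s, f i) b
      = ∑ i ∈ s, mulLeftRight ℂ (F →L[ℂ] F) (f i) b := by
  ext ρ; simp [mulLeftRight_apply, Finset.sum_mul, sum_apply]

private lemma mlr_sum_right {ι : Type*} (s : Finset ι) (a : F →L[ℂ] F) (f : ι → F →L[ℂ] F) :
    mulLeftRight ℂ (F →L[ℂ] F) a (∑ i ∈ s, f i)
      = ∑ i ∈ s, mulLeftRight ℂ (F →L[ℂ] F) a (f i) := by
  ext ρ; simp [mulLeftRight_apply, Finset.sum_mul, Finset.mul_sum, sum_apply]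

private lemma quad_comm_a {n : ℕ} (c : Fin n → F →L[ℂ] F)
    (hcc : ∀ j k, c j * c k + c k * c j = 0)
    (hcd : ∀ j k, c j * adjoint (c k) + adjoint (c k) * c j = if j = k then 1 else 0)
    (C : Matrix (Fin n) (Fin n) ℂ) (m : Fin n) :
    quadOp c C * c m - c m * quadOp c C = -∑ k, C m k • c k := by
  have term : ∀ j k, adjoint (c j) * c k * c m - c m * (adjoint (c j) * c k)
      = -(if m = j then c k else 0) := by
    intro j k
    have e1 : c k * c m = -(c m * c k) := eq_neg_of_add_eq_zero_left (hcc k m)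
    have e2 : c m * adjoint (c j) = (if m = j then 1 else 0) - adjoint (c j) * c m :=
      eq_sub_of_add_eq (hcd m j)
    have h2 : c m * (adjoint (c j) * c k)
        = (if m = j then c k else 0) - adjoint (c j) * (c m * c k) := by
      rw [← mul_assoc, e2, sub_mul, ite_mul, one_mul, zero_mul, mul_assoc]
    have h1 : adjoint (c j) * c k * c m = -(adjoint (c j) * (c m * c k)) := by
      rw [mul_assoc, e1, mul_neg]
    rw [h1, h2]; abel
  rw [quadOp, Finset.sum_mul, Finset.mul_sum]
  rw [← Finset.sum_sub_distrib]
  have : ∀ j ∈ Finset.univ, ((∑ k, C j k • (adjoint (c j) * c k)) * c m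
      - c m * ∑ k, C j k • (adjoint (c j) * c k))
      = -(if m = j then ∑ k, C j k • c k else 0) := by
    intro j _
    rw [Finset.sum_mul, Finset.mul_sum, ← Finset.sum_sub_distrib]
    simp only [smul_mul_assoc, mul_smul_comm, ← smul_sub, term]
    by_cases h : m = j <;> simp [h, Finset.sum_smul, smul_neg]
  rw [Finset.sum_congr rfl this]
  simp [Finset.sum_ite_eq]

private lemma quad_comm_b {n : ℕ} (c : Fin n → F →L[ℂ] F)
    (hcd : ∀ j k, c j * adjoint (c k) + adjoint (c k) * c j = if j = k then 1 else 0)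
    (hdd : ∀ j k, adjoint (c j) * adjoint (c k) + adjoint (c k) * adjoint (c j) = 0)
    (C : Matrix (Fin n) (Fin n) ℂ) (m : Fin n) :
    quadOp c C * adjoint (c m) - adjoint (c m) * quadOp c C
      = ∑ j, C j m • adjoint (c j) := by
  have term : ∀ j k, adjoint (c j) * c k * adjoint (c m)
      - adjoint (c m) * (adjoint (c j) * c k)
      = (if k = m then adjoint (c j) else 0) := by
    intro j k
    have e1 : adjoint (c m) * adjoint (c j) = -(adjoint (c j) * adjoint (c m)) :=
      eq_neg_of_add_eq_zero_left (hdd m j)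
    have e2 : c k * adjoint (c m) = (if k = m then 1 else 0) - adjoint (c m) * c k :=
      eq_sub_of_add_eq (hcd k m)
    have h1 : adjoint (c j) * c k * adjoint (c m)
        = (if k = m then adjoint (c j) else 0) - adjoint (c j) * (adjoint (c m) * c k) := by
      rw [mul_assoc, e2, mul_sub, mul_ite, mul_one, mul_zero, ← mul_assoc]
    have h2 : adjoint (c m) * (adjoint (c j) * c k)
        = -(adjoint (c j) * (adjoint (c m) * c k)) := by
      rw [← mul_assoc, e1, neg_mul, mul_assoc]
    rw [h1, h2]; abel
  rw [quadOp, Finset.sum_mul, Finset.mul_sum, ← Finset.sum_sub_distrib]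
  congr 1; funext j
  rw [Finset.sum_mul, Finset.mul_sum, ← Finset.sum_sub_distrib]
  simp only [smul_mul_assoc, mul_smul_comm, ← smul_sub, term]
  simp [Finset.sum_ite_eq']

private lemma sum_comm3 {ι κ γ M : Type*} [AddCommMonoid M]
    [Fintype ι] [Fintype κ] [Fintype γ] (f : ι → κ → γ → M) :
    ∑ j, ∑ k, ∑ m, f j k m = ∑ m, ∑ k, ∑ j, f j k m :=
  calc ∑ j, ∑ k, ∑ m, f j k m
      = ∑ j, ∑ m, ∑ k, f j k m := Finset.sum_congr rfl fun _ _ => Finset.sum_comm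
    _ = ∑ m, ∑ j, ∑ k, f j k m := Finset.sum_comm
    _ = ∑ m, ∑ k, ∑ j, f j k m := Finset.sum_congr rfl fun _ _ => Finset.sum_comm


private lemma sup_mul_smul {F : Type*} [NormedAddCommGroup F] [InnerProductSpace ℂ F]
    [FiniteDimensional ℂ F] (x : ℂ) (A B : (F →L[ℂ] F) →L[ℂ] (F →L[ℂ] F)) :
    A * (x • B) = x • (A * B) := by
  ext ρ; simp [ContinuousLinearMap.mul_apply]

private lemma sup_smul_mul {F : Type*} [NormedAddCommGroup F] [InnerProductSpace ℂ F]
    [FiniteDimensional ℂ F] (x : ℂ) (A B : (F →L[ℂ] F) →L[ℂ] (F →L[ℂ] F)) :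
    (x • A) * B = x • (A * B) := by
  ext ρ; simp [ContinuousLinearMap.mul_apply]

end Aux

open ContinuousLinearMap in
/-- commutation relations `[F̂(C), L̂(D)] = −L̂(DC)`,
`[B̂(C), L̂(D)] = −L̂(CD)`, `[F̂(C), Ĝ(D)] = Ĝ(CD)`, `[B̂(C), Ĝ(D)] = Ĝ(DC)`. -/
theorem stmt1 {n : ℕ} (hn : 0 < n)
    {F : Type*} [NormedAddCommGroup F] [InnerProductSpace ℂ F] [FiniteDimensional ℂ F]
    (c : Fin n → F →L[ℂ] F)
    (hcc : ∀ j k, c j * c k + c k * c j = 0)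
    (hcd : ∀ j k, c j * ContinuousLinearMap.adjoint (c k)
      + ContinuousLinearMap.adjoint (c k) * c j = if j = k then 1 else 0)
    (hdd : ∀ j k, ContinuousLinearMap.adjoint (c j) * ContinuousLinearMap.adjoint (c k)
      + ContinuousLinearMap.adjoint (c k) * ContinuousLinearMap.adjoint (c j) = 0)
    (C D : Matrix (Fin n) (Fin n) ℂ) :
    Fhat c C * Lhat c D - Lhat c D * Fhat c C = - Lhat c (D * C) ∧
    Bhat c C * Lhat c D - Lhat c D * Bhat c C = - Lhat c (C * D) ∧
    Fhat c C * Ghat c D - Ghat c D * Fhat c C = Ghat c (C * D) ∧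
    Bhat c C * Ghat c D - Ghat c D * Bhat c C = Ghat c (D * C) := by
  set Q := quadOp c C with hQ
  have keya : ∀ m, Q * c m - c m * Q = -∑ k, C m k • c k := quad_comm_a c hcc hcd C
  have keyb : ∀ m, Q * adjoint (c m) - adjoint (c m) * Q = ∑ j, C j m • adjoint (c j) :=
    quad_comm_b c hcd hdd C
  have keya' : ∀ m, c m * Q - Q * c m = ∑ k, C m k • c k := by
    intro m; rw [← neg_sub, keya, neg_neg]
  have keyb' : ∀ m, adjoint (c m) * Q - Q * adjoint (c m) = -∑ j, C j m • adjoint (c j) := by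
    intro m; rw [← neg_sub, keyb]
  refine ⟨?_, ?_, ?_, ?_⟩
  · calc Fhat c C * Lhat c D - Lhat c D * Fhat c C
        = ∑ j, ∑ k, D j k • mulLeftRight ℂ (F →L[ℂ] F) (Q * c k - c k * Q) (adjoint (c j)) := by
          simp only [Fhat, Lhat, ← hQ, mul_eq_mlr, Finset.mul_sum, Finset.sum_mul,
            sup_mul_smul, sup_smul_mul, mlr_comp, one_mul, mul_one,             ← Finset.sum_sub_distrib]
          exact Finset.sum_congr rfl fun j _ => Finset.sum_congr rfl fun k _ => by
            simp only [map_sub, ContinuousLinearMap.sub_apply, smul_sub]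
      _ = ∑ j, ∑ k, ∑ m, (-(D j k * C k m)) • mulLeftRight ℂ (F →L[ℂ] F) (c m) (adjoint (c j)) := by
          simp only [keya, mlr_neg_left, mlr_sum_left, mlr_smul_left, smul_neg,
            Finset.smul_sum, smul_smul, ← Finset.sum_neg_distrib, neg_smul]
      _ = - Lhat c (D * C) := by
          rw [Lhat, ← Finset.sum_neg_distrib]
          refine Finset.sum_congr rfl fun j _ => ?_
          rw [← Finset.sum_neg_distrib, Finset.sum_comm]
          refine Finset.sum_congr rfl fun m _ => ?_
          rw [Matrix.mul_apply, Finset.sum_smul, ← Finset.sum_neg_distrib]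
          exact Finset.sum_congr rfl fun k _ => by rw [neg_smul]
  · calc Bhat c C * Lhat c D - Lhat c D * Bhat c C
        = ∑ j, ∑ k, D j k • mulLeftRight ℂ (F →L[ℂ] F) (c k) (adjoint (c j) * Q - Q * adjoint (c j)) := by
          simp only [Bhat, Lhat, ← hQ, Finset.mul_sum, Finset.sum_mul,
            sup_mul_smul, sup_smul_mul, mlr_comp, one_mul, mul_one,             ← Finset.sum_sub_distrib]
          exact Finset.sum_congr rfl fun j _ => Finset.sum_congr rfl fun k _ => by
            simp only [map_sub, ContinuousLinearMap.sub_apply, smul_sub]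
      _ = ∑ j, ∑ k, ∑ m, (-(C m j * D j k)) • mulLeftRight ℂ (F →L[ℂ] F) (c k) (adjoint (c m)) := by
          simp only [keyb', mlr_neg_right, mlr_sum_right, mlr_smul_right, smul_neg,
            Finset.smul_sum, smul_smul, ← Finset.sum_neg_distrib, neg_smul]
          exact Finset.sum_congr rfl fun j _ => Finset.sum_congr rfl fun k _ =>
            Finset.sum_congr rfl fun m _ => by rw [mul_comm (D j k) (C m j)]
      _ = - Lhat c (C * D) := by
          rw [Lhat, ← Finset.sum_neg_distrib, sum_comm3]
          refine Finset.sum_congr rfl fun m _ => ?_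
          rw [← Finset.sum_neg_distrib]
          refine Finset.sum_congr rfl fun k _ => ?_
          rw [Matrix.mul_apply, Finset.sum_smul, ← Finset.sum_neg_distrib]
          exact Finset.sum_congr rfl fun j _ => by rw [neg_smul]
  · calc Fhat c C * Ghat c D - Ghat c D * Fhat c C
        = ∑ j, ∑ k, D j k • mulLeftRight ℂ (F →L[ℂ] F) (Q * adjoint (c j) - adjoint (c j) * Q) (c k) := by
          simp only [Fhat, Ghat, ← hQ, mul_eq_mlr, Finset.mul_sum, Finset.sum_mul,
            sup_mul_smul, sup_smul_mul, mlr_comp, one_mul, mul_one,             ← Finset.sum_sub_distrib]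
          exact Finset.sum_congr rfl fun j _ => Finset.sum_congr rfl fun k _ => by
            simp only [map_sub, ContinuousLinearMap.sub_apply, smul_sub]
      _ = ∑ j, ∑ k, ∑ m, (C m j * D j k) • mulLeftRight ℂ (F →L[ℂ] F) (adjoint (c m)) (c k) := by
          simp only [keyb, mlr_sum_left, mlr_smul_left, Finset.smul_sum, smul_smul]
          exact Finset.sum_congr rfl fun j _ => Finset.sum_congr rfl fun k _ =>
            Finset.sum_congr rfl fun m _ => by rw [mul_comm (D j k) (C m j)]
      _ = Ghat c (C * D) := by
          rw [Ghat, sum_comm3]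
          refine Finset.sum_congr rfl fun m _ => ?_
          refine Finset.sum_congr rfl fun k _ => ?_
          rw [Matrix.mul_apply, Finset.sum_smul]
  · calc Bhat c C * Ghat c D - Ghat c D * Bhat c C
        = ∑ j, ∑ k, D j k • mulLeftRight ℂ (F →L[ℂ] F) (adjoint (c j)) (c k * Q - Q * c k) := by
          simp only [Bhat, Ghat, ← hQ, Finset.mul_sum, Finset.sum_mul,
            sup_mul_smul, sup_smul_mul, mlr_comp, one_mul, mul_one,             ← Finset.sum_sub_distrib]
          exact Finset.sum_congr rfl fun j _ => Finset.sum_congr rfl fun k _ => by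
            simp only [map_sub, ContinuousLinearMap.sub_apply, smul_sub]
      _ = ∑ j, ∑ k, ∑ m, (D j k * C k m) • mulLeftRight ℂ (F →L[ℂ] F) (adjoint (c j)) (c m) := by
          simp only [keya', mlr_sum_right, mlr_smul_right, Finset.smul_sum, smul_smul]
      _ = Ghat c (D * C) := by
          rw [Ghat]
          refine Finset.sum_congr rfl fun j _ => ?_
          rw [Finset.sum_comm]
          refine Finset.sum_congr rfl fun m _ => ?_
          rw [Matrix.mul_apply, Finset.sum_smul]
end

section
/- For all complex n×n matrices C and D, the commutation relation [L̂(C), Ĝ(D)] = tr(CD)·id − F̂(DC) − B̂(CD) holds, where [X,Y] = XY − YX denotes the commutator of linear maps on End(F), id is the identity superoperator on End(F), and tr is the trace of an n×n matrix. -/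
lemma key {R : Type*} [Ring R] [Algebra ℂ R] {n : ℕ}
    (a b : Fin n → R)
    (h : ∀ k l, a k * b l = (if k = l then (1:R) else 0) - b l * a k)
    (C D : Matrix (Fin n) (Fin n) ℂ) (ρ : R) :
    (∑ j, ∑ k, C j k • (a k * (∑ l, ∑ m, D l m • (b l * ρ * a m)) * b j))
      - (∑ l, ∑ m, D l m • (b l * (∑ j, ∑ k, C j k • (a k * ρ * b j)) * a m))
    = (C * D).trace • ρ - (∑ j, ∑ k, (D * C) j k • (b j * a k)) * ρ
        - ρ * (∑ j, ∑ k, (C * D) j k • (b j * a k)) := by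
  have s1 : ∀ (g : Fin n → Fin n → R), ∑ x, ∑ y, g x y = ∑ y, ∑ x, g x y :=
    fun g => Finset.sum_comm
  have point : ∀ j k l m : Fin n,
      (C j k * D l m) • (a k * (b l * (ρ * (a m * b j))))
        - (D l m * C j k) • (b l * (a k * (ρ * (b j * a m))))
      = (C j k * D l m) • ((if k = l then (if m = j then ρ else 0) else 0)
          - (if k = l then ρ * (b j * a m) else 0)
          - (if m = j then b l * (a k * ρ) else 0)) := by
    intro j k l m
    rw [mul_comm (D l m), ← smul_sub]
    congr 1
    rw [show a k * (b l * (ρ * (a m * b j))) = (a k * b l) * ρ * (a m * b j) by noncomm_ring,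
      h k l, h m j]
    split_ifs <;> noncomm_ring
  -- normalize the LHS
  simp only [Finset.mul_sum, Finset.sum_mul, Finset.smul_sum, smul_mul_assoc, mul_smul_comm,
    smul_smul, mul_assoc]
  -- reorder the second quadruple sum from (l,m,j,k) to (j,k,l,m)
  rw [show (∑ l, ∑ m, ∑ j, ∑ k : Fin n,
        (D l m * C j k) • (b l * (a k * (ρ * (b j * a m)))))
      = ∑ j, ∑ k, ∑ l, ∑ m : Fin n,
        (D l m * C j k) • (b l * (a k * (ρ * (b j * a m)))) from by
    calc (∑ l, ∑ m, ∑ j, ∑ k : Fin n, (D l m * C j k) • (b l * (a k * (ρ * (b j * a m)))))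
        = ∑ l, ∑ j, ∑ m, ∑ k : Fin n, (D l m * C j k) • (b l * (a k * (ρ * (b j * a m)))) :=
          Finset.sum_congr rfl fun l _ => s1 _
      _ = ∑ j, ∑ l, ∑ m, ∑ k : Fin n, (D l m * C j k) • (b l * (a k * (ρ * (b j * a m)))) :=
          s1 _
      _ = ∑ j, ∑ l, ∑ k, ∑ m : Fin n, (D l m * C j k) • (b l * (a k * (ρ * (b j * a m)))) :=
          Finset.sum_congr rfl fun j _ => Finset.sum_congr rfl fun l _ => s1 _
      _ = ∑ j, ∑ k, ∑ l, ∑ m : Fin n, (D l m * C j k) • (b l * (a k * (ρ * (b j * a m)))) :=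
          Finset.sum_congr rfl fun j _ => s1 _]
  simp only [← Finset.sum_sub_distrib]
  rw [Finset.sum_congr rfl fun j _ => Finset.sum_congr rfl fun k _ =>
    Finset.sum_congr rfl fun l _ => Finset.sum_congr rfl fun m _ => point j k l m]
  simp only [smul_sub, Finset.sum_sub_distrib]
  simp only [smul_ite, smul_zero, Finset.sum_ite_eq, Finset.sum_ite_eq', Finset.mem_univ,
    if_true, Matrix.trace, Matrix.diag, Matrix.mul_apply, Finset.sum_smul]
  have hA1 : (∑ j, ∑ k, ∑ l, ∑ m : Fin n,
        if k = l then if m = j then (C j k * D l m) • ρ else 0 else 0)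
      = ∑ j, ∑ i : Fin n, (C j i * D i j) • ρ := by
    refine Finset.sum_congr rfl fun j _ => Finset.sum_congr rfl fun k _ => ?_
    rw [s1 fun l m => if k = l then if m = j then (C j k * D l m) • ρ else 0 else 0]
    simp
  have hA2 : (∑ j, ∑ k, ∑ l, ∑ m : Fin n,
        if k = l then (C j k * D l m) • (ρ * (b j * a m)) else 0)
      = ∑ j, ∑ k, ∑ i : Fin n, (C j i * D i k) • (ρ * (b j * a k)) := by
    refine Finset.sum_congr rfl fun j _ => ?_
    calc (∑ k, ∑ l, ∑ m : Fin n, if k = l then (C j k * D l m) • (ρ * (b j * a m)) else 0)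
        = ∑ k, ∑ m : Fin n, (C j k * D k m) • (ρ * (b j * a m)) := by
          refine Finset.sum_congr rfl fun k _ => ?_
          rw [s1 fun l m => if k = l then (C j k * D l m) • (ρ * (b j * a m)) else 0]
          simp
      _ = ∑ k, ∑ i : Fin n, (C j i * D i k) • (ρ * (b j * a k)) := s1 _
  have hA3 : (∑ j, ∑ k, ∑ l : Fin n, (C j k * D l j) • (b l * (a k * ρ)))
      = ∑ l, ∑ k, ∑ i : Fin n, (D l i * C i k) • (b l * (a k * ρ)) := by
    calc (∑ j, ∑ k, ∑ l : Fin n, (C j k * D l j) • (b l * (a k * ρ)))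
        = ∑ j, ∑ l, ∑ k : Fin n, (C j k * D l j) • (b l * (a k * ρ)) :=
          Finset.sum_congr rfl fun j _ => s1 _
      _ = ∑ l, ∑ j, ∑ k : Fin n, (C j k * D l j) • (b l * (a k * ρ)) := s1 _
      _ = ∑ l, ∑ k, ∑ j : Fin n, (C j k * D l j) • (b l * (a k * ρ)) :=
          Finset.sum_congr rfl fun l _ => s1 _
      _ = ∑ l, ∑ k, ∑ i : Fin n, (D l i * C i k) • (b l * (a k * ρ)) := by
          refine Finset.sum_congr rfl fun l _ => Finset.sum_congr rfl fun k _ =>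
            Finset.sum_congr rfl fun i _ => ?_
          rw [mul_comm]
  rw [hA1, hA2, hA3]
  abel

/-- `[L̂(C), Ĝ(D)] = tr(CD)·id − F̂(DC) − B̂(CD)`. -/
theorem stmt2 {n : ℕ} (hn : 0 < n)
    {F : Type*} [NormedAddCommGroup F] [InnerProductSpace ℂ F] [FiniteDimensional ℂ F]
    (c : Fin n → F →L[ℂ] F)
    (hcc : ∀ j k, c j * c k + c k * c j = 0)
    (hcd : ∀ j k, c j * ContinuousLinearMap.adjoint (c k)
      + ContinuousLinearMap.adjoint (c k) * c j = if j = k then 1 else 0)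
    (hdd : ∀ j k, ContinuousLinearMap.adjoint (c j) * ContinuousLinearMap.adjoint (c k)
      + ContinuousLinearMap.adjoint (c k) * ContinuousLinearMap.adjoint (c j) = 0)
    (C D : Matrix (Fin n) (Fin n) ℂ) :
    Lhat c C * Ghat c D - Ghat c D * Lhat c C
      = (C * D).trace • (1 : (F →L[ℂ] F) →L[ℂ] (F →L[ℂ] F))
        - Fhat c (D * C) - Bhat c (C * D) := by
  refine ContinuousLinearMap.ext fun ρ => ?_
  have h : ∀ k l, c k * ContinuousLinearMap.adjoint (c l)
      = (if k = l then (1 : F →L[ℂ] F) else 0) - ContinuousLinearMap.adjoint (c l) * c k :=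
    fun k l => eq_sub_of_add_eq (hcd k l)
  simp only [Lhat, Ghat, Fhat, Bhat, quadOp, ContinuousLinearMap.sub_apply,
    ContinuousLinearMap.mul_apply, ContinuousLinearMap.smul_apply, ContinuousLinearMap.one_apply,
    ContinuousLinearMap.sum_apply, ContinuousLinearMap.mulLeftRight_apply,
    ContinuousLinearMap.mul_apply', one_mul]
  exact key c (fun j => ContinuousLinearMap.adjoint (c j)) h C D ρ
end

section
/- For all complex n×n matrices A, B, M and N, the Liouvillians satisfy the commutation relation [L(A, M), L(B, N)] = L([A, B], AN + NA† − BM − MB†), where [A,B] = AB − BA is the matrix commutator and [X,Y] = XY − YX is the commutator of linear maps on End(F). -/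
open scoped Matrix

/-- The Liouvillian
`L(A, M) = L̂(−A − A† − M) + Ĝ(M) + F̂(A + M) + B̂(A† + M) − (tr M)·id`. -/
noncomputable def Liou {F : Type*} [NormedAddCommGroup F] [InnerProductSpace ℂ F]
    [FiniteDimensional ℂ F] {n : ℕ} (c : Fin n → F →L[ℂ] F)
    (A M : Matrix (Fin n) (Fin n) ℂ) : (F →L[ℂ] F) →L[ℂ] (F →L[ℂ] F) :=
  Lhat c (-A - Aᴴ - M) + Ghat c M + Fhat c (A + M) + Bhat c (Aᴴ + M)
    - M.trace • (1 : (F →L[ℂ] F) →L[ℂ] (F →L[ℂ] F))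

/-!
Left and right multiplication by the `c j` and `(c j)†` give two mutually commuting systems of
fermionic modes on `End F`: canonical anticommutation relations within a side, commutation
across the sides. Each of `L̂`, `Ĝ`, `F̂` is a bilinear `Q(X) = Σ X I J • cre I * ann J` in these
`2n` modes, and so is `B̂` after normal ordering, which costs a multiple of the identity; hence
`L(A, M) = Q(X(A, M)) + tr(Aᴴ)` for an explicit block matrix `X(A, M)`. With only two sides the
sign rules make `Q` a Lie algebra morphism, `[Q X, Q Y] = Q [X, Y]`, so the theorem reduces to the
block-matrix identity `[X(A, M), X(B, N)] = X([A, B], AN + NAᴴ − BM − MBᴴ)` and `tr [A, B]ᴴ = 0`.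
-/

structure IsCAR {m A : Type*} [Ring A] [DecidableEq m] (ann cre : m → A) : Prop where
  ann_anticomm : ∀ i j, ann i * ann j + ann j * ann i = 0
  ann_cre_anticomm : ∀ i j, ann i * cre j + cre j * ann i = if i = j then 1 else 0
  cre_anticomm : ∀ i j, cre i * cre j + cre j * cre i = 0

namespace IsCAR

variable {m A B : Type*} [Ring A] [Ring B] [DecidableEq m] {ann cre : m → A}

theorem map (h : IsCAR ann cre) {G : Type*} [FunLike G A B] [RingHomClass G A B] (f : G) :
    IsCAR (f ∘ ann) (f ∘ cre) where
  ann_anticomm i j := by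
    simp only [Function.comp_apply, ← map_mul, ← map_add, h.ann_anticomm, map_zero]
  ann_cre_anticomm i j := by
    simp only [Function.comp_apply, ← map_mul, ← map_add, h.ann_cre_anticomm, apply_ite f,
      map_one, map_zero]
  cre_anticomm i j := by
    simp only [Function.comp_apply, ← map_mul, ← map_add, h.cre_anticomm, map_zero]

theorem op (h : IsCAR ann cre) : IsCAR (MulOpposite.op ∘ ann) (MulOpposite.op ∘ cre) where
  ann_anticomm i j := by
    simp only [Function.comp_apply, ← MulOpposite.op_mul, ← MulOpposite.op_add,
      add_comm (ann j * ann i), h.ann_anticomm, MulOpposite.op_zero]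
  ann_cre_anticomm i j := by
    simp only [Function.comp_apply, ← MulOpposite.op_mul, ← MulOpposite.op_add,
      add_comm (cre j * ann i), h.ann_cre_anticomm, apply_ite MulOpposite.op, MulOpposite.op_one,
      MulOpposite.op_zero]
  cre_anticomm i j := by
    simp only [Function.comp_apply, ← MulOpposite.op_mul, ← MulOpposite.op_add,
      add_comm (cre j * cre i), h.cre_anticomm, MulOpposite.op_zero]

end IsCAR

/-- Modes on the same side anticommute, modes on different sides commute. -/
def modeSign {ι : Type*} (side : ι → Bool) (i j : ι) : ℤ := if side i = side j then -1 else 1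

theorem modeSign_mul_self {ι : Type*} (side : ι → Bool) (i j : ι) :
    modeSign side i j * modeSign side i j = 1 := by
  unfold modeSign; split_ifs <;> rfl

/-- This is where it matters that there are only two sides. -/
theorem modeSign_mul_mul_mul {ι : Type*} (side : ι → Bool) (i j k l : ι) :
    modeSign side j k * modeSign side j l * modeSign side i k * modeSign side l i = 1 := by
  unfold modeSign
  cases side i <;> cases side j <;> cases side k <;> cases side l <;> rfl

structure IsSidedCAR {ι S : Type*} [Ring S] [DecidableEq ι] (side : ι → Bool)
    (ann cre : ι → S) : Prop where
  ann_mul_ann : ∀ i j, ann i * ann j = modeSign side i j • (ann j * ann i)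
  ann_mul_cre : ∀ i j, ann i * cre j = modeSign side i j • (cre j * ann i) + if i = j then 1 else 0
  cre_mul_cre : ∀ i j, cre i * cre j = modeSign side i j • (cre j * cre i)

theorem IsCAR.isSidedCAR_sumElim {m m' A A' S : Type*} [Ring A] [Ring A'] [Ring S]
    [DecidableEq m] [DecidableEq m'] {ann cre : m → A} {ann' cre' : m' → A'}
    (h : IsCAR ann cre) (h' : IsCAR ann' cre')
    {G G' : Type*} [FunLike G A S] [RingHomClass G A S] [FunLike G' A' S] [RingHomClass G' A' S]
    (f : G) (g : G') (hfg : ∀ x y, Commute (f x) (g y)) :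
    IsSidedCAR Sum.isLeft (Sum.elim (f ∘ ann) (g ∘ ann')) (Sum.elim (f ∘ cre) (g ∘ cre')) := by
  have hf := h.map f
  have hg := h'.map g
  refine ⟨?_, ?_, ?_⟩ <;> rintro (i | i) (j | j) <;>
    simp only [modeSign, Sum.elim_inl, Sum.elim_inr, Sum.isLeft_inl, Sum.isLeft_inr,
      Sum.inl.injEq, Sum.inr.injEq, reduceCtorEq, if_true, if_false, neg_smul, one_smul, add_zero]
  · exact eq_neg_of_add_eq_zero_left (hf.ann_anticomm i j)
  · exact (hfg _ _).eq
  · exact (hfg _ _).eq.symm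
  · exact eq_neg_of_add_eq_zero_left (hg.ann_anticomm i j)
  · exact eq_neg_add_of_add_eq ((add_comm _ _).trans (hf.ann_cre_anticomm i j))
  · exact (hfg _ _).eq
  · exact (hfg _ _).eq.symm
  · exact eq_neg_add_of_add_eq ((add_comm _ _).trans (hg.ann_cre_anticomm i j))
  · exact eq_neg_of_add_eq_zero_left (hf.cre_anticomm i j)
  · exact (hfg _ _).eq
  · exact (hfg _ _).eq.symm
  · exact eq_neg_of_add_eq_zero_left (hg.cre_anticomm i j)

/-- Move `b` and then `a` to the right of `u * v`, one signed swap at a time; only the two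
contractions `z` and `w` survive. -/
theorem mul_mul_sub_mul_mul_of_signs {S : Type*} [Ring S] {a b u v z w : S} {s₁ s₂ s₃ s₄ : ℤ}
    (hs : s₁ * s₂ * s₃ * s₄ = 1) (hs₄ : s₄ * s₄ = 1)
    (hbu : b * u = s₁ • (u * b) + z) (hbv : b * v = s₂ • (v * b))
    (hau : a * u = s₃ • (u * a)) (hva : v * a = s₄ • (a * v) + w) :
    a * b * (u * v) - u * v * (a * b) = a * z * v - u * w * b := by
  have hav : a * v = s₄ • (v * a) - s₄ • w := by
    rw [hva, smul_add, smul_smul, hs₄, one_smul, add_sub_cancel_right]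
  have : a * b * (u * v) = (s₁ * s₂ * s₃ * s₄) • (u * v * (a * b))
      - (s₁ * s₂ * s₃ * s₄) • (u * w * b) + a * z * v :=
    calc a * b * (u * v) = a * (b * u) * v := by simp only [mul_assoc]
      _ = s₁ • (a * u * (b * v)) + a * z * v := by
        rw [hbu]; simp only [mul_add, add_mul, mul_smul_comm, smul_mul_assoc, mul_assoc]
      _ = (s₁ * s₂) • (a * u * v * b) + a * z * v := by
        rw [hbv]; simp only [mul_smul_comm, smul_smul, mul_assoc]
      _ = (s₁ * s₂ * s₃) • (u * (a * v) * b) + a * z * v := by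
        rw [hau]; simp only [smul_mul_assoc, smul_smul, mul_assoc]
      _ = _ := by
        rw [hav]
        simp only [mul_sub, sub_mul, mul_smul_comm, smul_mul_assoc, smul_smul, smul_sub, mul_assoc]
  rw [this, hs, one_smul, one_smul]
  abel

theorem IsSidedCAR.commutator_mul_mul {ι S : Type*} [Ring S] [DecidableEq ι] {side : ι → Bool}
    {ann cre : ι → S} (h : IsSidedCAR side ann cre) (i j k l : ι) :
    cre i * ann j * (cre k * ann l) - cre k * ann l * (cre i * ann j)
      = (if j = k then cre i * ann l else 0) - (if l = i then cre k * ann j else 0) := by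
  rw [mul_mul_sub_mul_mul_of_signs (modeSign_mul_mul_mul side i j k l)
    (modeSign_mul_self side l i) (h.ann_mul_cre j k) (h.ann_mul_ann j l) (h.cre_mul_cre i k)
    (h.ann_mul_cre l i)]
  simp only [mul_ite, ite_mul, mul_one, mul_zero, zero_mul]

def quadSum {ι κ R S : Type*} [Fintype ι] [Fintype κ] [SMul R S] [NonUnitalNonAssocSemiring S]
    (cre : ι → S) (ann : κ → S) (X : Matrix ι κ R) : S :=
  ∑ i, ∑ j, X i j • (cre i * ann j)

section QuadSum

variable {ι κ R S : Type*} [Fintype ι] [Fintype κ] [CommRing R] [Ring S] [Algebra R S]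

theorem quadSum_neg (cre : ι → S) (ann : κ → S) (X : Matrix ι κ R) :
    quadSum cre ann (-X) = -quadSum cre ann X := by
  simp only [quadSum, Matrix.neg_apply, neg_smul, Finset.sum_neg_distrib]

theorem quadSum_sub (cre : ι → S) (ann : κ → S) (X Y : Matrix ι κ R) :
    quadSum cre ann (X - Y) = quadSum cre ann X - quadSum cre ann Y := by
  simp only [quadSum, Matrix.sub_apply, sub_smul, Finset.sum_sub_distrib]

theorem quadSum_mul_sub_mul_quadSum (cre : ι → S) (ann : κ → S) (X : Matrix ι κ R) (q : S) :
    quadSum cre ann X * q - q * quadSum cre ann X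
      = ∑ i, ∑ j, X i j • (cre i * ann j * q - q * (cre i * ann j)) := by
  simp only [quadSum, Finset.sum_mul, Finset.mul_sum, smul_mul_assoc, mul_smul_comm, smul_sub,
    Finset.sum_sub_distrib]

theorem IsSidedCAR.quadSum_commutator [DecidableEq ι] {side : ι → Bool} {ann cre : ι → S}
    (h : IsSidedCAR side ann cre) (X Y : Matrix ι ι R) :
    quadSum cre ann X * quadSum cre ann Y - quadSum cre ann Y * quadSum cre ann X
      = quadSum cre ann (X * Y - Y * X) := by
  have hE : ∀ i j, cre i * ann j * quadSum cre ann Y - quadSum cre ann Y * (cre i * ann j)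
      = ∑ l, Y j l • (cre i * ann l) - ∑ k, Y k i • (cre k * ann j) := by
    intro i j
    rw [← neg_sub, quadSum_mul_sub_mul_quadSum]
    simp only [← neg_sub (cre i * ann j * _), h.commutator_mul_mul, smul_sub,
      Finset.sum_sub_distrib, smul_ite, smul_zero, Finset.sum_ite_irrel, Finset.sum_const_zero,
      Finset.sum_ite_eq, Finset.sum_ite_eq', Finset.mem_univ, if_true, neg_sub]
  rw [quadSum_mul_sub_mul_quadSum, quadSum_sub]
  simp only [hE, smul_sub, Finset.sum_sub_distrib, Finset.smul_sum, smul_smul]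
  congr 1
  · simp only [quadSum, Matrix.mul_apply, Finset.sum_smul]
    exact Finset.sum_congr rfl fun i _ => Finset.sum_comm
  · simp only [quadSum, Matrix.mul_apply, Finset.sum_smul]
    rw [Finset.sum_comm, Finset.sum_congr rfl fun j _ => Finset.sum_comm, Finset.sum_comm]
    simp only [mul_comm (X _ _)]

theorem quadSum_sumElim_fromBlocks (x : ι → S) (x' : κ → S) (y : ι → S) (y' : κ → S)
    (P : Matrix ι ι R) (Q : Matrix ι κ R) (T : Matrix κ ι R) (U : Matrix κ κ R) :
    quadSum (Sum.elim x x') (Sum.elim y y') (Matrix.fromBlocks P Q T U)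
      = quadSum x y P + quadSum x y' Q + quadSum x' y T + quadSum x' y' U := by
  simp only [quadSum, Fintype.sum_sum_type, Matrix.fromBlocks_apply₁₁, Matrix.fromBlocks_apply₁₂,
    Matrix.fromBlocks_apply₂₁, Matrix.fromBlocks_apply₂₂, Sum.elim_inl, Sum.elim_inr,
    Finset.sum_add_distrib]
  abel

theorem quadSum_eq_trace_smul_one_sub [DecidableEq ι] {ann cre : ι → S}
    (h : ∀ i j, ann i * cre j + cre j * ann i = if i = j then 1 else 0) (X : Matrix ι ι R) :
    quadSum cre ann X = X.trace • 1 - quadSum ann cre Xᵀ := by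
  have hswap : ∀ i j, cre i * ann j = (if j = i then 1 else 0) - ann j * cre i :=
    fun i j => eq_sub_of_add_eq' (h j i)
  simp only [quadSum, hswap, smul_sub, Finset.sum_sub_distrib, smul_ite, smul_zero,
    Finset.sum_ite_eq', Finset.mem_univ, if_true, Matrix.trace, Matrix.diag, Finset.sum_smul,
    Matrix.transpose_apply]
  rw [Finset.sum_comm (f := fun i j => X j i • (ann i * cre j))]

end QuadSum

theorem add_smul_one_commutator {R S : Type*} [CommSemiring R] [Ring S] [Algebra R S]
    (x y : S) (a b : R) :
    (x + a • 1) * (y + b • 1) - (y + b • 1) * (x + a • 1) = x * y - y * x := by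
  simp only [add_mul, mul_add, smul_one_mul, mul_smul_one, smul_add, smul_smul, mul_comm b a]
  abel

section RegularRepresentations

variable (𝕜 A : Type*) [NontriviallyNormedField 𝕜] [NormedRing A] [NormedAlgebra 𝕜 A]

noncomputable def leftMulAlgHom : A →ₐ[𝕜] A →L[𝕜] A where
  toFun := ContinuousLinearMap.mul 𝕜 A
  map_one' := by ext; simp
  map_mul' x y := by ext; simp [mul_assoc]
  map_zero' := by simp
  map_add' := by simp
  commutes' r := by ext; simp [Algebra.algebraMap_eq_smul_one]

noncomputable def rightMulAlgHom : Aᵐᵒᵖ →ₐ[𝕜] A →L[𝕜] A where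
  toFun x := (ContinuousLinearMap.mul 𝕜 A).flip x.unop
  map_one' := by ext; simp
  map_mul' x y := by ext; simp [mul_assoc]
  map_zero' := by ext; simp
  map_add' x y := by ext; simp
  commutes' r := by ext; simp [Algebra.algebraMap_eq_smul_one]

@[simp] theorem leftMulAlgHom_apply (x y : A) : leftMulAlgHom 𝕜 A x y = x * y := rfl

@[simp] theorem rightMulAlgHom_apply (x : Aᵐᵒᵖ) (y : A) :
    rightMulAlgHom 𝕜 A x y = y * x.unop := rfl

theorem commute_leftMulAlgHom_rightMulAlgHom (x : A) (y : Aᵐᵒᵖ) :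
    Commute (leftMulAlgHom 𝕜 A x) (rightMulAlgHom 𝕜 A y) := by
  ext; simp [mul_assoc]

/-- `Sum.inl j` is the left mode `ρ ↦ x j * ρ`, `Sum.inr j` the right mode `ρ ↦ ρ * x j`. -/
noncomputable def superFamily {m : Type*} (x : m → A) : m ⊕ m → A →L[𝕜] A :=
  Sum.elim (leftMulAlgHom 𝕜 A ∘ x) (rightMulAlgHom 𝕜 A ∘ MulOpposite.op ∘ x)

theorem IsCAR.isSidedCAR_superFamily {m : Type*} [DecidableEq m] {ann cre : m → A}
    (h : IsCAR ann cre) :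
    IsSidedCAR Sum.isLeft (superFamily 𝕜 A ann) (superFamily 𝕜 A cre) :=
  h.isSidedCAR_sumElim h.op _ _ (commute_leftMulAlgHom_rightMulAlgHom 𝕜 A)

end RegularRepresentations

/-- The blocks are the coefficients of `F̂`, `Ĝ`, `L̂` and of the normal-ordered `B̂`. -/
def liouvilleMatrix {m R : Type*} [Ring R] [StarRing R] (A M : Matrix m m R) :
    Matrix (m ⊕ m) (m ⊕ m) R :=
  Matrix.fromBlocks (A + M) M (-A - Aᴴ - M) (-(Aᴴ + M))

theorem liouvilleMatrix_commutator {m R : Type*} [Fintype m] [Ring R] [StarRing R]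
    (A B M N : Matrix m m R) :
    liouvilleMatrix A M * liouvilleMatrix B N - liouvilleMatrix B N * liouvilleMatrix A M
      = liouvilleMatrix (A * B - B * A) (A * N + N * Aᴴ - B * M - M * Bᴴ) := by
  simp only [liouvilleMatrix, Matrix.fromBlocks_multiply, sub_eq_add_neg, Matrix.fromBlocks_neg,
    Matrix.fromBlocks_add, Matrix.conjTranspose_add, Matrix.conjTranspose_neg,
    Matrix.conjTranspose_mul]
  congr 1 <;> noncomm_ring

section Liouvillian

open ContinuousLinearMap

variable {F : Type*} [NormedAddCommGroup F] [InnerProductSpace ℂ F] [FiniteDimensional ℂ F]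
  {n : ℕ} (c : Fin n → F →L[ℂ] F)

theorem Fhat_eq_quadSum (X : Matrix (Fin n) (Fin n) ℂ) :
    Fhat c X = quadSum (leftMulAlgHom ℂ (F →L[ℂ] F) ∘ fun j => adjoint (c j))
      (leftMulAlgHom ℂ (F →L[ℂ] F) ∘ c) X := by
  ext ρ : 1
  simp [Fhat, quadOp, quadSum, mul_assoc]

theorem Ghat_eq_quadSum (X : Matrix (Fin n) (Fin n) ℂ) :
    Ghat c X = quadSum (leftMulAlgHom ℂ (F →L[ℂ] F) ∘ fun j => adjoint (c j))
      (rightMulAlgHom ℂ (F →L[ℂ] F) ∘ MulOpposite.op ∘ c) X := by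
  ext ρ : 1
  simp [Ghat, quadSum, mul_assoc]

theorem Lhat_eq_quadSum (X : Matrix (Fin n) (Fin n) ℂ) :
    Lhat c X = quadSum (rightMulAlgHom ℂ (F →L[ℂ] F) ∘ MulOpposite.op ∘ fun j => adjoint (c j))
      (leftMulAlgHom ℂ (F →L[ℂ] F) ∘ c) X := by
  ext ρ : 1
  simp [Lhat, quadSum, mul_assoc]

theorem Bhat_eq_quadSum (X : Matrix (Fin n) (Fin n) ℂ) :
    Bhat c X = quadSum (rightMulAlgHom ℂ (F →L[ℂ] F) ∘ MulOpposite.op ∘ c)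
      (rightMulAlgHom ℂ (F →L[ℂ] F) ∘ MulOpposite.op ∘ fun j => adjoint (c j)) Xᵀ := by
  ext ρ : 1
  simp only [Bhat, quadOp, quadSum, map_sum, map_smul, sum_apply, smul_apply, mulLeftRight_apply,
    one_mul, Matrix.transpose_apply, Function.comp_apply, mul_apply_eq_comp, rightMulAlgHom_apply,
    MulOpposite.unop_op, mul_assoc]
  exact Finset.sum_comm

theorem Liou_eq_quadSum (hc : IsCAR c fun j => adjoint (c j)) (A M : Matrix (Fin n) (Fin n) ℂ) :
    Liou c A M = quadSum (superFamily ℂ (F →L[ℂ] F) fun j => adjoint (c j))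
      (superFamily ℂ (F →L[ℂ] F) c) (liouvilleMatrix A M) + Aᴴ.trace • 1 := by
  have hR := (hc.op.map (rightMulAlgHom ℂ (F →L[ℂ] F))).ann_cre_anticomm
  rw [superFamily, superFamily, liouvilleMatrix, quadSum_sumElim_fromBlocks,
    quadSum_eq_trace_smul_one_sub hR, Matrix.transpose_neg, quadSum_neg, Liou, ← Fhat_eq_quadSum,
    ← Ghat_eq_quadSum, ← Lhat_eq_quadSum, ← Bhat_eq_quadSum]
  simp only [Matrix.trace_neg, Matrix.trace_add, neg_smul, add_smul]
  abel

end Liouvillian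

theorem stmt3_general {n : ℕ}
    {F : Type*} [NormedAddCommGroup F] [InnerProductSpace ℂ F] [FiniteDimensional ℂ F]
    (c : Fin n → F →L[ℂ] F)
    (hcc : ∀ j k, c j * c k + c k * c j = 0)
    (hcd : ∀ j k, c j * ContinuousLinearMap.adjoint (c k)
      + ContinuousLinearMap.adjoint (c k) * c j = if j = k then 1 else 0)
    (hdd : ∀ j k, ContinuousLinearMap.adjoint (c j) * ContinuousLinearMap.adjoint (c k)
      + ContinuousLinearMap.adjoint (c k) * ContinuousLinearMap.adjoint (c j) = 0)
    (A B M N : Matrix (Fin n) (Fin n) ℂ) :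
    Liou c A M * Liou c B N - Liou c B N * Liou c A M
      = Liou c (A * B - B * A) (A * N + N * Aᴴ - B * M - M * Bᴴ) := by
  have hc : IsCAR c fun j => ContinuousLinearMap.adjoint (c j) := ⟨hcc, hcd, hdd⟩
  have htrace : (A * B - B * A)ᴴ.trace = 0 := by
    rw [Matrix.trace_conjTranspose, Matrix.trace_sub, Matrix.trace_mul_comm, sub_self, star_zero]
  rw [Liou_eq_quadSum c hc, Liou_eq_quadSum c hc, Liou_eq_quadSum c hc, htrace,
    zero_smul ℂ (1 : (F →L[ℂ] F) →L[ℂ] (F →L[ℂ] F)), add_zero, add_smul_one_commutator,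
    (hc.isSidedCAR_superFamily ℂ _).quadSum_commutator, liouvilleMatrix_commutator]

/-- `[L(A, M), L(B, N)] = L([A, B], AN + NA† − BM − MB†)`. -/
theorem stmt3 {n : ℕ} (hn : 0 < n)
    {F : Type*} [NormedAddCommGroup F] [InnerProductSpace ℂ F] [FiniteDimensional ℂ F]
    (c : Fin n → F →L[ℂ] F)
    (hcc : ∀ j k, c j * c k + c k * c j = 0)
    (hcd : ∀ j k, c j * ContinuousLinearMap.adjoint (c k)
      + ContinuousLinearMap.adjoint (c k) * c j = if j = k then 1 else 0)
    (hdd : ∀ j k, ContinuousLinearMap.adjoint (c j) * ContinuousLinearMap.adjoint (c k)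
      + ContinuousLinearMap.adjoint (c k) * ContinuousLinearMap.adjoint (c j) = 0)
    (A B M N : Matrix (Fin n) (Fin n) ℂ) :
    Liou c A M * Liou c B N - Liou c B N * Liou c A M
      = Liou c (A * B - B * A) (A * N + N * Aᴴ - B * M - M * Bᴴ) :=
  stmt3_general c hcc hcd hdd A B M N
end

section
/- For all complex n×n matrices A, M and all real t, s ≥ 0, the pairs p_t(A, M) = (e^{tA}, ∫₀^t e^{sA} M e^{sA†} ds) satisfy the semigroup property p_t(A, M) ∘ p_s(A, M) = p_{t+s}(A, M) with respect to the composition law (U, M) ∘ (V, N) = (UV, UNU† + M); moreover p_0(A, M) = (I, O). -/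
open scoped Matrix

attribute [local instance] Matrix.linftyOpNormedAddCommGroup Matrix.linftyOpNormedSpace
  Matrix.linftyOpNormedRing Matrix.linftyOpNormedAlgebra

/-- The composition law `(U, M) ∘ (V, N) = (UV, UNU† + M)` of the semidirect product
`GL(n;ℂ) ⋉ M(n;ℂ)` acting on `M(n;ℂ)` by affine transformations `X ↦ UXU† + M`. -/
noncomputable def affComp {n : ℕ}
    (p q : Matrix (Fin n) (Fin n) ℂ × Matrix (Fin n) (Fin n) ℂ) :
    Matrix (Fin n) (Fin n) ℂ × Matrix (Fin n) (Fin n) ℂ :=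
  (p.1 * q.1, p.1 * q.2 * p.1ᴴ + p.2)

/-- `p_t(A, M) = (e^{tA}, ∫₀^t e^{sA} M e^{sA†} ds)`. -/
noncomputable def pAff {n : ℕ} (A M : Matrix (Fin n) (Fin n) ℂ) (t : ℝ) :
    Matrix (Fin n) (Fin n) ℂ × Matrix (Fin n) (Fin n) ℂ :=
  (NormedSpace.exp ((t : ℂ) • A),
    ∫ s in (0 : ℝ)..t,
      NormedSpace.exp ((s : ℂ) • A) * M * NormedSpace.exp ((s : ℂ) • Aᴴ))

/-! The matrices `e^{tA}` form a one-parameter group, and the integrand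
`f u = e^{uA} M e^{uA†}` satisfies `f (t + u) = e^{tA} (f u) e^{tA}†`. Conjugating `∫₀^s f` by
`e^{tA}` therefore gives `∫ₜ^{t+s} f`, and adding `∫₀^t f` gives `∫₀^{t+s} f`. -/

open NormedSpace

theorem intervalIntegral_zero_add_of_shift_eq_map {𝕜 E : Type*} [RCLike 𝕜]
    [NormedAddCommGroup E] [NormedSpace 𝕜 E] [NormedSpace ℝ E] [CompleteSpace E]
    {f : ℝ → E} (hf : Continuous f) (L : E →L[𝕜] E) {t : ℝ}
    (hL : ∀ u, f (t + u) = L (f u)) (s : ℝ) :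
    ∫ u in 0..t + s, f u = L (∫ u in 0..s, f u) + ∫ u in 0..t, f u := by
  have h_shift : L (∫ u in 0..s, f u) = ∫ u in t..t + s, f u := by
    rw [← L.intervalIntegral_comp_comm (hf.intervalIntegrable 0 s)]
    simp only [← hL]
    simpa only [add_zero] using intervalIntegral.integral_comp_add_left f t (a := 0) (b := s)
  rw [h_shift, add_comm (∫ u in t..t + s, f u), intervalIntegral.integral_add_adjacent_intervals
    (hf.intervalIntegrable 0 t) (hf.intervalIntegrable t (t + s))]

theorem Matrix.exp_add_smul {m R 𝔸 : Type*} [Fintype m] [DecidableEq m] [CommSemiring R]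
    [NormedRing 𝔸] [NormedAlgebra ℚ 𝔸] [CompleteSpace 𝔸] [Algebra R 𝔸] (x y : R)
    (A : Matrix m m 𝔸) : exp ((x + y) • A) = exp (x • A) * exp (y • A) := by
  rw [add_smul]
  exact Matrix.exp_add_of_commute _ _ (((Commute.refl A).smul_left x).smul_right y)

theorem Matrix.conjTranspose_exp_ofReal_smul {m 𝕂 : Type*} [Fintype m] [DecidableEq m]
    [RCLike 𝕂] (x : ℝ) (A : Matrix m m 𝕂) :
    (exp ((x : 𝕂) • A))ᴴ = exp ((x : 𝕂) • Aᴴ) := by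
  rw [← Matrix.exp_conjTranspose, Matrix.conjTranspose_smul, RCLike.star_def, RCLike.conj_ofReal]

theorem Matrix.exp_smul_mul_mul_exp_smul_conjTranspose_ofReal_add {m 𝕂 : Type*} [Fintype m]
    [DecidableEq m] [RCLike 𝕂] (A M : Matrix m m 𝕂) (t u : ℝ) :
    exp (((t + u : ℝ) : 𝕂) • A) * M * exp (((t + u : ℝ) : 𝕂) • Aᴴ) =
      exp ((t : 𝕂) • A) * (exp ((u : 𝕂) • A) * M * exp ((u : 𝕂) • Aᴴ)) *
        (exp ((t : 𝕂) • A))ᴴ := by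
  rw [RCLike.ofReal_add, Matrix.exp_add_smul, add_comm (t : 𝕂), Matrix.exp_add_smul,
    Matrix.conjTranspose_exp_ofReal_smul]
  simp only [mul_assoc]

theorem stmt5_general {n : ℕ} (A M : Matrix (Fin n) (Fin n) ℂ) (t s : ℝ) :
    affComp (pAff A M t) (pAff A M s) = pAff A M (t + s) ∧
    pAff A M 0 = (1, 0) := by
  refine ⟨Prod.ext ?_ ?_, by simp [pAff]⟩
  · simp only [affComp, pAff, Complex.ofReal_add, Matrix.exp_add_smul]
  · have h_cont : Continuous fun u : ℝ => exp ((u : ℂ) • A) * M * exp ((u : ℂ) • Aᴴ) := by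
      fun_prop
    set U := exp ((t : ℂ) • A)
    exact (intervalIntegral_zero_add_of_shift_eq_map h_cont
      (ContinuousLinearMap.mulLeftRight ℂ _ U Uᴴ)
      (Matrix.exp_smul_mul_mul_exp_smul_conjTranspose_ofReal_add A M t) s).symm

/-- the pairs `p_t(A, M)` form a one-parameter semigroup for the
affine composition law, and `p_0(A, M) = (I, O)`. -/
theorem stmt5 {n : ℕ} (hn : 0 < n) (A M : Matrix (Fin n) (Fin n) ℂ)
    (t s : ℝ) (ht : 0 ≤ t) (hs : 0 ≤ s) :
    affComp (pAff A M t) (pAff A M s) = pAff A M (t + s) ∧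
    pAff A M 0 = (1, 0) :=
  stmt5_general A M t s
end

section
/- For all vectors ξ, ξ₁, ξ₂, η, η₁, η₂ ∈ ℂⁿ, the superoperator L(O, ξη†) satisfies: (i) L(O, ξη†)ρ = [(c,ξ), {(η,c), ρ}] for every ρ ∈ End(F), where (c,ξ) = Σ_j ξ_j c_j† and (η,c) = Σ_j conj(η_j) c_j, [·,·] is the commutator and {·,·} the anticommutator; (ii) L(O, ξη†)² = 0; and (iii) L(O, ξ₁η₁†) L(O, ξ₂η₂†) + L(O, ξ₂η₁†) L(O, ξ₁η₂†) = 0. -/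
open scoped Matrix

open scoped ComplexConjugate

/-- `(c, ξ) = Σ_j ξ_j c_j†`. -/
noncomputable def cXi {F : Type*} [NormedAddCommGroup F] [InnerProductSpace ℂ F]
    [FiniteDimensional ℂ F] {n : ℕ} (c : Fin n → F →L[ℂ] F) (ξ : Fin n → ℂ) :
    F →L[ℂ] F :=
  ∑ j, ξ j • ContinuousLinearMap.adjoint (c j)

/-- `(η, c) = Σ_j conj(η_j) c_j`. -/
noncomputable def etaC {F : Type*} [NormedAddCommGroup F] [InnerProductSpace ℂ F]
    [FiniteDimensional ℂ F] {n : ℕ} (c : Fin n → F →L[ℂ] F) (η : Fin n → ℂ) :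
    F →L[ℂ] F :=
  ∑ j, conj (η j) • c j

/-- The rank-one matrix `ξη†` with entries `ξ_j conj(η_k)`. -/
noncomputable def outerMat {n : ℕ} (ξ η : Fin n → ℂ) : Matrix (Fin n) (Fin n) ℂ :=
  Matrix.of fun j k => ξ j * conj (η k)


lemma sum_mul_middle {A : Type*} [Ring A] [Algebra ℂ A] {n : ℕ}
    (f g : Fin n → ℂ) (x y : Fin n → A) (m : A) :
    (∑ k, g k • y k) * m * (∑ j, f j • x j)
      = ∑ j, ∑ k, (f j * g k) • (y k * m * x j) := by
  simp only [Finset.sum_mul, Finset.mul_sum, Finset.smul_sum,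
    smul_mul_assoc, mul_smul_comm, smul_smul]

lemma sum_mul_middle' {A : Type*} [Ring A] [Algebra ℂ A] {n : ℕ}
    (f g : Fin n → ℂ) (x y : Fin n → A) (m : A) :
    (∑ j, f j • x j) * m * (∑ k, g k • y k)
      = ∑ j, ∑ k, (f j * g k) • (x j * m * y k) := by
  simp only [Finset.sum_mul, Finset.mul_sum, Finset.smul_sum,
    smul_mul_assoc, mul_smul_comm, smul_smul]
  rw [Finset.sum_comm]
  exact Finset.sum_congr rfl fun j _ => Finset.sum_congr rfl fun k _ => by rw [mul_comm]

lemma sum_mul_pair {A : Type*} [Ring A] [Algebra ℂ A] {n : ℕ}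
    (f g : Fin n → ℂ) (x y : Fin n → A) :
    (∑ j, f j • x j) * (∑ k, g k • y k)
      = ∑ j, ∑ k, (f j * g k) • (x j * y k) := by
  simp only [Finset.sum_mul, Finset.mul_sum, Finset.smul_sum,
    smul_mul_assoc, mul_smul_comm, smul_smul]
  rw [Finset.sum_comm]
  exact Finset.sum_congr rfl fun j _ => Finset.sum_congr rfl fun k _ => by rw [mul_comm]

lemma sum_pair {A : Type*} [Ring A] [Algebra ℂ A] {n : ℕ}
    (f g : Fin n → ℂ) (x y : Fin n → A) :
    (∑ j, f j • x j) * (∑ k, g k • y k) + (∑ k, g k • y k) * (∑ j, f j • x j)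
      = ∑ j, ∑ k, (f j * g k) • (x j * y k + y k * x j) := by
  rw [sum_mul_pair]
  simp only [Finset.sum_mul, Finset.mul_sum, Finset.smul_sum,
    smul_mul_assoc, mul_smul_comm, smul_smul]
  rw [← Finset.sum_add_distrib]
  refine Finset.sum_congr rfl fun j _ => ?_
  rw [← Finset.sum_add_distrib]
  refine Finset.sum_congr rfl fun k _ => ?_
  rw [smul_add]

/-- `Fop a b x = [a, {b, x}]`. -/
def Fop {A : Type*} [Ring A] (a b x : A) : A :=
  a * (b * x + x * b) - (b * x + x * b) * a

lemma ring1 {A : Type*} [Ring A] [Algebra ℂ A] (a b ρ : A) (s : ℂ)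
    (h : a * b + b * a = s • 1) :
    -(b * ρ * a) + a * ρ * b + a * b * ρ + ρ * (a * b) - s • ρ = Fop a b ρ := by
  have h2 : ρ * (a * b) = s • ρ - ρ * (b * a) := by
    rw [eq_sub_of_add_eq h, mul_sub, mul_smul_comm, mul_one]
  rw [Fop, h2]
  simp only [mul_add, add_mul, sub_mul, mul_sub, mul_assoc]
  abel

lemma key_s10 {A : Type*} [Ring A] [Algebra ℂ A]
    (a₁ a₂ b₁ b₂ r : A) (s₁₁ s₁₂ s₂₁ s₂₂ : ℂ)
    (haa : a₁ * a₂ + a₂ * a₁ = 0)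
    (hbb : b₁ * b₂ + b₂ * b₁ = 0)
    (h₁₁ : a₁ * b₁ + b₁ * a₁ = s₁₁ • 1)
    (h₁₂ : a₁ * b₂ + b₂ * a₁ = s₁₂ • 1)
    (h₂₁ : a₂ * b₁ + b₁ * a₂ = s₂₁ • 1)
    (h₂₂ : a₂ * b₂ + b₂ * a₂ = s₂₂ • 1) :
    Fop a₁ b₁ (Fop a₂ b₂ r) + Fop a₂ b₁ (Fop a₁ b₂ r) = 0 := by
  have mk : ∀ (a b : A) (s : ℂ), a * b + b * a = s • 1 →
      ∀ x, b * (a * x) = s • x - a * (b * x) := by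
    intro a b s h x
    rw [← mul_assoc, eq_sub_of_add_eq' h, sub_mul, smul_mul_assoc, one_mul, mul_assoc]
  have Ea : ∀ x, a₂ * (a₁ * x) = -(a₁ * (a₂ * x)) := by
    intro x
    rw [← mul_assoc, eq_neg_of_add_eq_zero_right haa, neg_mul, mul_assoc]
  have Eb : ∀ x, b₂ * (b₁ * x) = -(b₁ * (b₂ * x)) := by
    intro x
    rw [← mul_assoc, eq_neg_of_add_eq_zero_right hbb, neg_mul, mul_assoc]
  simp only [Fop, mul_add, add_mul, mul_sub, sub_mul, mul_assoc,
    mk _ _ _ h₁₁, mk _ _ _ h₁₂, mk _ _ _ h₂₁, mk _ _ _ h₂₂,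
    eq_sub_of_add_eq' h₁₁, eq_sub_of_add_eq' h₁₂,
    eq_sub_of_add_eq' h₂₁, eq_sub_of_add_eq' h₂₂,
    Ea, Eb, eq_neg_of_add_eq_zero_right haa, eq_neg_of_add_eq_zero_right hbb,
    mul_smul_comm, smul_mul_assoc, mul_one, one_mul,
    smul_sub, smul_add, smul_neg, mul_neg, neg_mul, neg_neg, smul_smul,
    neg_sub, sub_mul]
  module

set_option maxHeartbeats 1000000 in
set_option synthInstance.maxHeartbeats 1000000 in
/-- (i) `L(O, ξη†)ρ = [(c,ξ), {(η,c), ρ}]`, (ii) `L(O, ξη†)² = 0`,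
(iii) `L(O, ξ₁η₁†) L(O, ξ₂η₂†) + L(O, ξ₂η₁†) L(O, ξ₁η₂†) = 0`. -/
theorem stmt10 {n : ℕ} (hn : 0 < n)
    {F : Type*} [NormedAddCommGroup F] [InnerProductSpace ℂ F] [FiniteDimensional ℂ F]
    (c : Fin n → F →L[ℂ] F)
    (hcc : ∀ j k, c j * c k + c k * c j = 0)
    (hcd : ∀ j k, c j * ContinuousLinearMap.adjoint (c k)
      + ContinuousLinearMap.adjoint (c k) * c j = if j = k then 1 else 0)
    (hdd : ∀ j k, ContinuousLinearMap.adjoint (c j) * ContinuousLinearMap.adjoint (c k)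
      + ContinuousLinearMap.adjoint (c k) * ContinuousLinearMap.adjoint (c j) = 0)
    (ξ ξ₁ ξ₂ η η₁ η₂ : Fin n → ℂ) :
    (∀ ρ : F →L[ℂ] F,
        Liou c 0 (outerMat ξ η) ρ
          = cXi c ξ * (etaC c η * ρ + ρ * etaC c η)
            - (etaC c η * ρ + ρ * etaC c η) * cXi c ξ) ∧
    Liou c 0 (outerMat ξ η) * Liou c 0 (outerMat ξ η) = 0 ∧
    Liou c 0 (outerMat ξ₁ η₁) * Liou c 0 (outerMat ξ₂ η₂)
      + Liou c 0 (outerMat ξ₂ η₁) * Liou c 0 (outerMat ξ₁ η₂) = 0 := by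
  classical
  have hmix : ∀ (ξ' η' : Fin n → ℂ),
      cXi c ξ' * etaC c η' + etaC c η' * cXi c ξ'
        = (outerMat ξ' η').trace • (1 : F →L[ℂ] F) := by
    intro ξ' η'
    rw [cXi, etaC, sum_pair]
    have step : ∀ j k, ContinuousLinearMap.adjoint (c j) * c k
        + c k * ContinuousLinearMap.adjoint (c j)
        = if k = j then (1 : F →L[ℂ] F) else 0 := by
      intro j k; rw [add_comm]; exact hcd k j
    calc (∑ j, ∑ k, (ξ' j * (starRingEnd ℂ) (η' k)) •
            (ContinuousLinearMap.adjoint (c j) * c k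
              + c k * ContinuousLinearMap.adjoint (c j)))
        = ∑ j, ∑ k, (ξ' j * (starRingEnd ℂ) (η' k)) •
            (if k = j then (1 : F →L[ℂ] F) else 0) := by
          exact Finset.sum_congr rfl fun j _ => Finset.sum_congr rfl fun k _ => by
            rw [step]
      _ = ∑ j, (ξ' j * (starRingEnd ℂ) (η' j)) • (1 : F →L[ℂ] F) := by
          simp [smul_ite]
      _ = (outerMat ξ' η').trace • (1 : F →L[ℂ] F) := by
          rw [Matrix.trace, ← Finset.sum_smul]
          simp [outerMat, Matrix.diag]
  have haa : ∀ (ξ' ξ'' : Fin n → ℂ),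
      cXi c ξ' * cXi c ξ'' + cXi c ξ'' * cXi c ξ' = 0 := by
    intro ξ' ξ''
    rw [cXi, cXi, sum_pair]
    simp [hdd]
  have hbb : ∀ (η' η'' : Fin n → ℂ),
      etaC c η' * etaC c η'' + etaC c η'' * etaC c η' = 0 := by
    intro η' η''
    rw [etaC, etaC, sum_pair]
    simp [hcc]
  have happ : ∀ (ξ' η' : Fin n → ℂ) (ρ : F →L[ℂ] F),
      Liou c 0 (outerMat ξ' η') ρ = Fop (cXi c ξ') (etaC c η') ρ := by
    intro ξ' η' ρ
    have hm : (-(0 : Matrix (Fin n) (Fin n) ℂ) - (0 : Matrix (Fin n) (Fin n) ℂ)ᴴ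
        - outerMat ξ' η') = -outerMat ξ' η' := by simp
    have hL : Lhat c (outerMat ξ' η') ρ = etaC c η' * ρ * cXi c ξ' := by
      simp only [Lhat, ContinuousLinearMap.sum_apply, ContinuousLinearMap.smul_apply,
        ContinuousLinearMap.mulLeftRight_apply, outerMat, Matrix.of_apply]
      rw [etaC, cXi, sum_mul_middle]
    have hG : Ghat c (outerMat ξ' η') ρ = cXi c ξ' * ρ * etaC c η' := by
      simp only [Ghat, ContinuousLinearMap.sum_apply, ContinuousLinearMap.smul_apply,
        ContinuousLinearMap.mulLeftRight_apply, outerMat, Matrix.of_apply]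
      rw [etaC, cXi, sum_mul_middle']
    have hQ : quadOp c (outerMat ξ' η') = cXi c ξ' * etaC c η' := by
      rw [quadOp, cXi, etaC, sum_mul_pair]
      simp [outerMat]
    have hLneg : Lhat c (-outerMat ξ' η') ρ = -(Lhat c (outerMat ξ' η') ρ) := by
      simp [Lhat, Matrix.neg_apply, ContinuousLinearMap.sum_apply,
        ContinuousLinearMap.smul_apply, neg_smul, Finset.sum_neg_distrib]
    have hexp : Liou c 0 (outerMat ξ' η') ρ
        = -(etaC c η' * ρ * cXi c ξ') + cXi c ξ' * ρ * etaC c η'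
          + (cXi c ξ' * etaC c η') * ρ + ρ * (cXi c ξ' * etaC c η')
          - (outerMat ξ' η').trace • ρ := by
      simp only [Liou, hm, ContinuousLinearMap.add_apply, ContinuousLinearMap.sub_apply,
        ContinuousLinearMap.smul_apply, ContinuousLinearMap.one_apply, zero_add,
        Matrix.conjTranspose_zero, neg_zero, zero_sub, sub_zero, Fhat, Bhat, ContinuousLinearMap.mul_apply',
        ContinuousLinearMap.mulLeftRight_apply, one_mul, hLneg, hL, hG, hQ]
    rw [hexp]
    exact ring1 _ _ _ _ (hmix ξ' η')
  have hpair : ∀ (ξ₁' η₁' ξ₂' η₂' : Fin n → ℂ),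
      Liou c 0 (outerMat ξ₁' η₁') * Liou c 0 (outerMat ξ₂' η₂')
        + Liou c 0 (outerMat ξ₂' η₁') * Liou c 0 (outerMat ξ₁' η₂') = 0 := by
    intro ξ₁' η₁' ξ₂' η₂'
    refine ContinuousLinearMap.ext fun ρ => ?_
    simp only [ContinuousLinearMap.add_apply, ContinuousLinearMap.mul_apply,
      ContinuousLinearMap.zero_apply, happ]
    exact key_s10 (cXi c ξ₁') (cXi c ξ₂') (etaC c η₁') (etaC c η₂') ρ
      (outerMat ξ₁' η₁').trace (outerMat ξ₁' η₂').trace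
      (outerMat ξ₂' η₁').trace (outerMat ξ₂' η₂').trace
      (haa ξ₁' ξ₂') (hbb η₁' η₂')
      (hmix ξ₁' η₁') (hmix ξ₁' η₂') (hmix ξ₂' η₁') (hmix ξ₂' η₂')
  refine ⟨fun ρ => (happ ξ η ρ).trans rfl, ?_, hpair ξ₁ η₁ ξ₂ η₂⟩
  have h2 := hpair ξ η ξ η
  have hz : ∀ (ρ : F →L[ℂ] F) (v : F),
      (Liou c 0 (outerMat ξ η)) ((Liou c 0 (outerMat ξ η)) ρ) v = 0 := by
    intro ρ v
    have h4 := congrArg (fun T : (F →L[ℂ] F) →L[ℂ] (F →L[ℂ] F) => ((T ρ) v : F)) h2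
    simp only [ContinuousLinearMap.add_apply, ContinuousLinearMap.mul_apply,
      ContinuousLinearMap.zero_apply, ContinuousLinearMap.zero_apply] at h4
    have h5 : (2 : ℂ) • ((Liou c 0 (outerMat ξ η)) ((Liou c 0 (outerMat ξ η)) ρ) v) = 0 := by
      rw [two_smul]; exact h4
    exact (smul_eq_zero.mp h5).resolve_left two_ne_zero
  refine ContinuousLinearMap.ext fun ρ => ContinuousLinearMap.ext fun v => ?_
  simp [ContinuousLinearMap.mul_apply, hz]
end

section
/- Let A be a complex n×n matrix such that −A − A† is positive semidefinite, and let λ be an eigenvalue of A with Re λ = 0. Then the generalized eigenspace of λ equals the eigenspace: ker((A − λI)ⁿ) = ker(A − λI). -/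
open scoped Matrix ComplexOrder

/-- if `−A − A†` is positive semidefinite and `λ` is an eigenvalue of `A`
with `Re λ = 0`, then the generalized eigenspace of `λ` equals the eigenspace:
`ker((A − λI)ⁿ) = ker(A − λI)`. -/
theorem stmt12 {n : ℕ} (A : Matrix (Fin n) (Fin n) ℂ)
    (hA : (-A - Aᴴ).PosSemidef)
    (lam : ℂ) (hre : lam.re = 0)
    (hlam : ∃ v : Fin n → ℂ, v ≠ 0 ∧ A.mulVec v = lam • v) :
    ∀ w : Fin n → ℂ,
      ((A - lam • (1 : Matrix (Fin n) (Fin n) ℂ)) ^ n).mulVec w = 0 ↔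
      (A - lam • (1 : Matrix (Fin n) (Fin n) ℂ)).mulVec w = 0 := by
  set B : Matrix (Fin n) (Fin n) ℂ := A - lam • (1 : Matrix (Fin n) (Fin n) ℂ) with hB
  -- `-B - Bᴴ = -A - Aᴴ` since `lam + conj lam = 0`.
  have hsum : lam + (starRingEnd ℂ) lam = 0 := by
    rw [Complex.add_conj]
    simp [hre]
  have hS : -B - Bᴴ = -A - Aᴴ := by
    ext i j
    by_cases h : i = j <;>
      simp [hB, Matrix.sub_apply, Matrix.conjTranspose_apply, Matrix.one_apply, h]
    linear_combination hsum
  have hS' : (-B - Bᴴ).PosSemidef := hS ▸ hA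
  -- key step : ker B² ⊆ ker B
  have key : ∀ w : Fin n → ℂ, B.mulVec (B.mulVec w) = 0 → B.mulVec w = 0 := by
    intro w hw
    set u := B.mulVec w with hu
    have hBu : B.mulVec u = 0 := hw
    -- quadratic form of u vanishes
    have hq : star u ⬝ᵥ (-B - Bᴴ).mulVec u = 0 := by
      rw [Matrix.sub_mulVec, Matrix.neg_mulVec, hBu, neg_zero, zero_sub,
        dotProduct_neg, Matrix.dotProduct_mulVec, Matrix.vecMul_conjTranspose,
        star_star, hBu]
      simp
    have hSu : (-B - Bᴴ).mulVec u = 0 := (hS'.dotProduct_mulVec_zero_iff u).mp hq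
    have hBHu : Bᴴ.mulVec u = 0 := by
      have := hSu
      rw [Matrix.sub_mulVec, Matrix.neg_mulVec, hBu, neg_zero, zero_sub, neg_eq_zero] at this
      exact this
    -- now ‖u‖² = ⟨w, Bᴴ u⟩ = 0
    have : star u ⬝ᵥ u = 0 := by
      rw [hu, Matrix.star_mulVec, ← Matrix.dotProduct_mulVec, hBHu, dotProduct_zero]
    exact dotProduct_star_self_eq_zero.mp this
  -- from key : ker B^(k+1) ⊆ ker B by induction
  have main : ∀ k : ℕ, ∀ w : Fin n → ℂ, (B ^ (k + 1)).mulVec w = 0 → B.mulVec w = 0 := by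
    intro k
    induction k with
    | zero => intro w h; simpa using h
    | succ k ih =>
      intro w h
      have h' : (B ^ (k + 1)).mulVec (B.mulVec w) = 0 := by
        rw [Matrix.mulVec_mulVec, ← pow_succ]
        exact h
      exact key w (ih _ h')
  intro w
  rcases Nat.eq_zero_or_pos n with hn | hn
  · subst hn
    constructor <;> intro _ <;> (funext i; exact absurd i.2 (by omega))
  · obtain ⟨k, rfl⟩ : ∃ k, n = k + 1 := ⟨n - 1, by omega⟩
    constructor
    · exact main k w
    · intro h
      rw [pow_succ, ← Matrix.mulVec_mulVec, h, Matrix.mulVec_zero]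
end

section
/- Let A be a complex n×n matrix such that −A − A† is positive semidefinite, and let λ, μ be distinct eigenvalues of A with Re λ = 0. Then the generalized eigenspaces of λ and μ are orthogonal: for every φ ∈ ker((A − λI)ⁿ) and every χ ∈ ker((A − μI)ⁿ), (φ, χ) = 0 with respect to the standard inner product on ℂⁿ. -/
/-!
Put `N = A - λ • 1`. Since `Re λ = 0`, also `-N - Nᴴ = -A - Aᴴ ≥ 0`, so for `N w = 0` the
quadratic form `star w ⬝ᵥ (-N - Nᴴ) *ᵥ w` vanishes, whence `Nᴴ w = 0`: right null vectors of `N`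
are left null vectors. This kills Jordan chains, so `φ` is an honest left null vector of `N`,
i.e. `star φ ᵥ* (A - μ • 1) = (λ - μ) • star φ`. Pairing with `(A - μ • 1) ^ n *ᵥ χ = 0` gives
`(λ - μ) ^ n * (star φ ⬝ᵥ χ) = 0`.
-/

open scoped Matrix ComplexOrder

open Matrix

namespace Matrix

variable {ι : Type*}

theorem neg_sub_conjTranspose_of_re_eq_zero {𝕜 : Type*} [RCLike 𝕜] [DecidableEq ι]
    (A : Matrix ι ι 𝕜) {c : 𝕜} (hc : RCLike.re c = 0) :
    -(A - c • 1) - (A - c • 1)ᴴ = -A - Aᴴ := by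
  have hconj : star c = -c := by
    rw [← add_eq_zero_iff_eq_neg', RCLike.star_def, RCLike.add_conj, hc, RCLike.ofReal_zero,
      mul_zero]
  rw [conjTranspose_sub, conjTranspose_smul, conjTranspose_one, hconj, neg_smul]
  abel

variable [Fintype ι]

theorem vecMul_pow_eq_pow_smul {R : Type*} [CommSemiring R] [DecidableEq ι]
    {M : Matrix ι ι R} {ψ : ι → R} {c : R} (hψ : ψ ᵥ* M = c • ψ) (k : ℕ) :
    ψ ᵥ* M ^ k = c ^ k • ψ := by
  induction k with
  | zero => simp
  | succ k ih => rw [pow_succ, ← vecMul_vecMul, ih, smul_vecMul, hψ, smul_smul, pow_succ]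

theorem mulVec_eq_zero_of_pow_mulVec_eq_zero {R : Type*} [Ring R] [PartialOrder R]
    [StarRing R] [StarOrderedRing R] [NoZeroDivisors R] [DecidableEq ι] {N : Matrix ι ι R}
    (hN : ∀ w, N *ᵥ w = 0 → star w ᵥ* N = 0) {v : ι → R} :
    ∀ {k : ℕ}, N ^ k *ᵥ v = 0 → N *ᵥ v = 0
  | 0, hv => by rw [pow_zero, one_mulVec] at hv; rw [hv, mulVec_zero]
  | k + 1, hv => by
    have hNNv : N *ᵥ (N *ᵥ v) = 0 :=
      mulVec_eq_zero_of_pow_mulVec_eq_zero hN (by rwa [mulVec_mulVec, ← pow_succ])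
    -- `star (N v) ⬝ᵥ N v = (star (N v) ᵥ* N) ⬝ᵥ v = 0`
    rw [← dotProduct_star_self_eq_zero, dotProduct_mulVec, hN _ hNNv, zero_dotProduct]

theorem vecMul_eq_zero_of_mulVec_eq_zero_of_posSemidef {𝕜 : Type*} [RCLike 𝕜]
    {N : Matrix ι ι 𝕜} (hN : (-N - Nᴴ).PosSemidef) {w : ι → 𝕜} (hw : N *ᵥ w = 0) :
    star w ᵥ* N = 0 := by
  have hquad : star w ⬝ᵥ (-N - Nᴴ) *ᵥ w = 0 := by
    rw [sub_mulVec, neg_mulVec, hw, dotProduct_sub, dotProduct_mulVec, ← star_mulVec]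
    simp [hw]
  have hNH : Nᴴ *ᵥ w = 0 := by
    have := (hN.dotProduct_mulVec_zero_iff w).mp hquad
    rwa [sub_mulVec, neg_mulVec, hw, neg_zero, zero_sub, neg_eq_zero] at this
  rw [← conjTranspose_conjTranspose N, ← star_mulVec, hNH, star_zero]

end Matrix

theorem stmt13_general {n : ℕ} (A : Matrix (Fin n) (Fin n) ℂ)
    (hA : (-A - Aᴴ).PosSemidef)
    (lam mu : ℂ) (hne : lam ≠ mu) (hre : lam.re = 0) :
    ∀ φ χ : Fin n → ℂ,
      ((A - lam • (1 : Matrix (Fin n) (Fin n) ℂ)) ^ n).mulVec φ = 0 →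
      ((A - mu • (1 : Matrix (Fin n) (Fin n) ℂ)) ^ n).mulVec χ = 0 →
      dotProduct (star φ) χ = 0 := by
  intro φ χ hφ hχ
  set N := A - lam • (1 : Matrix (Fin n) (Fin n) ℂ)
  have hN : (-N - Nᴴ).PosSemidef := by
    rwa [neg_sub_conjTranspose_of_re_eq_zero A (c := lam) hre]
  have hφN : star φ ᵥ* N = 0 :=
    vecMul_eq_zero_of_mulVec_eq_zero_of_posSemidef hN
      (mulVec_eq_zero_of_pow_mulVec_eq_zero
        (fun _ => vecMul_eq_zero_of_mulVec_eq_zero_of_posSemidef hN) hφ)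
  have hφ_left : star φ ᵥ* (A - mu • 1) = (lam - mu) • star φ := by
    have : A - mu • 1 = N + (lam - mu) • 1 := by simp only [N, sub_smul]; abel
    rw [this, vecMul_add, hφN, vecMul_smul, vecMul_one, zero_add]
  have hpair := congrArg (· ⬝ᵥ χ) (vecMul_pow_eq_pow_smul hφ_left n)
  simp only [← dotProduct_mulVec, hχ, dotProduct_zero, smul_dotProduct, smul_eq_mul] at hpair
  exact (mul_eq_zero.mp hpair.symm).resolve_left (pow_ne_zero _ (sub_ne_zero.mpr hne))

/-- if `−A − A†` is positive semidefinite and `λ ≠ μ` are eigenvalues of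
`A` with `Re λ = 0`, then the generalized eigenspaces of `λ` and `μ` are orthogonal. -/
theorem stmt13 {n : ℕ} (A : Matrix (Fin n) (Fin n) ℂ)
    (hA : (-A - Aᴴ).PosSemidef)
    (lam mu : ℂ) (hne : lam ≠ mu) (hre : lam.re = 0)
    (hlam : ∃ v : Fin n → ℂ, v ≠ 0 ∧ A.mulVec v = lam • v)
    (hmu : ∃ v : Fin n → ℂ, v ≠ 0 ∧ A.mulVec v = mu • v) :
    ∀ φ χ : Fin n → ℂ,
      ((A - lam • (1 : Matrix (Fin n) (Fin n) ℂ)) ^ n).mulVec φ = 0 →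
      ((A - mu • (1 : Matrix (Fin n) (Fin n) ℂ)) ^ n).mulVec χ = 0 →
      dotProduct (star φ) χ = 0 :=
  stmt13_general A hA lam mu hne hre
end

section
/- Let M and T be Hermitian complex n×n matrices. Then for every real t ≥ 0, exp(t·L(−M/2, M)) ∘ Ĝ(T) = Ĝ(e^{tM/2} T e^{tM/2}) ∘ exp(t·L(−M/2, M)), where exp on the left-hand sides denotes the exponential of a linear operator on End(F) and e^{tM/2} is the matrix exponential. -/
/-!
For `A = -M/2` with `M` Hermitian the `L̂`-part of the Liouvillian vanishes, so
`L(A, M) = Ĝ(M) + F̂(M/2) + B̂(M/2) - tr M`. The canonical anticommutation relations give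
`[Ĝ(M), Ĝ(S)] = 0`, `[F̂(M/2), Ĝ(S)] = Ĝ(MS/2)` and `[B̂(M/2), Ĝ(S)] = Ĝ(SM/2)`; hence
`S ↦ Ĝ(S)` intertwines the derivation `S ↦ NS + SN` (with `N = tM/2`) with the commutator
`[tL, ·]`. Exponentiating both derivations gives `Ĝ(e^N T e^N) = e^{tL} Ĝ(T) e^{-tL}`.
-/

open scoped Matrix

/-- The exponential of a linear operator on the finite-dimensional space `End(F)`
(i.e. of a superoperator), given by `NormedSpace.exp` with respect to the operator norm. -/
noncomputable def superExp {F : Type*} [NormedAddCommGroup F] [InnerProductSpace ℂ F]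
    [FiniteDimensional ℂ F]
    (x : (F →L[ℂ] F) →L[ℂ] F →L[ℂ] F) : (F →L[ℂ] F) →L[ℂ] F →L[ℂ] F :=
  letI R : NonUnitalSeminormedRing ((F →L[ℂ] F) →L[ℂ] F →L[ℂ] F) := inferInstance
  @NormedSpace.exp _ _
    R.toPseudoMetricSpace.toUniformSpace.toTopologicalSpace
    (@NonUnitalSeminormedRing.toIsTopologicalRing _ R) x

attribute [local instance] Matrix.linftyOpNormedAddCommGroup Matrix.linftyOpNormedSpace
  Matrix.linftyOpNormedRing Matrix.linftyOpNormedAlgebra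

namespace NormedSpace

open ContinuousLinearMap

variable {𝕜 𝔸 𝔹 E F : Type*} [RCLike 𝕜]
  [NormedRing 𝔸] [NormedAlgebra 𝕜 𝔸] [CompleteSpace 𝔸]
  [NormedRing 𝔹] [NormedAlgebra 𝕜 𝔹] [CompleteSpace 𝔹]
  [NormedAddCommGroup E] [NormedSpace 𝕜 E] [CompleteSpace E]
  [NormedAddCommGroup F] [NormedSpace 𝕜 F] [CompleteSpace F]

theorem map_exp_eq_exp_apply_of_map_pow (ψ : 𝔸 →L[𝕜] E) (x : 𝔸) (e : E →L[𝕜] E)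
    (h : ∀ k, ψ (x ^ k) = (e ^ k) (ψ 1)) : ψ (exp x) = exp e (ψ 1) := by
  refine ((exp_series_hasSum_exp' (𝕂 := 𝕜) x).mapL ψ).unique ?_
  convert (exp_series_hasSum_exp' (𝕂 := 𝕜) e).mapL (apply 𝕜 E (ψ 1)) using 1
  · funext k
    simp [h]
  · rfl

theorem exp_mul_apply (a y : 𝔸) : exp (mul 𝕜 𝔸 a) y = exp a * y := by
  simpa using (map_exp_eq_exp_apply_of_map_pow ((mul 𝕜 𝔸).flip y) a (mul 𝕜 𝔸 a) fun k => by
    simp [pow_apply_eq_iterate, show ⇑(mul 𝕜 𝔸 a) = (a * ·) from rfl, mul_left_iterate]).symm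

theorem exp_flip_mul_apply (b y : 𝔸) : exp ((mul 𝕜 𝔸).flip b) y = y * exp b := by
  simpa using (map_exp_eq_exp_apply_of_map_pow (mul 𝕜 𝔸 y) b ((mul 𝕜 𝔸).flip b) fun k => by
    simp [pow_apply_eq_iterate, show ⇑((mul 𝕜 𝔸).flip b) = (· * b) from rfl,
      mul_right_iterate]).symm

theorem exp_mul_add_flip_mul_apply (a b y : 𝔸) :
    exp (mul 𝕜 𝔸 a + (mul 𝕜 𝔸).flip b) y = exp a * y * exp b := by
  let : NormedAlgebra ℚ (𝔸 →L[𝕜] 𝔸) := .restrictScalars ℚ 𝕜 _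
  have hcomm : Commute (mul 𝕜 𝔸 a) ((mul 𝕜 𝔸).flip b) := ext fun z => by simp [mul_assoc]
  rw [exp_add_of_commute hcomm, mul_apply_eq_comp, exp_flip_mul_apply, exp_mul_apply, mul_assoc]

theorem map_exp_apply_of_semiconj (φ : E →L[𝕜] F) {d : E →L[𝕜] E} {e : F →L[𝕜] F}
    (h : Function.Semiconj φ d e) (x : E) : φ (exp d x) = exp e (φ x) :=
  map_exp_eq_exp_apply_of_map_pow (φ.comp (apply 𝕜 E x)) d e fun k => by
    simpa [pow_apply_eq_iterate] using h.iterate_right k x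

theorem exp_mul_map_eq_map_mul_exp (φ : 𝔸 →L[𝕜] 𝔹) {N : 𝔸} {L : 𝔹}
    (h : ∀ S, φ (N * S + S * N) = L * φ S - φ S * L) (T : 𝔸) :
    exp L * φ T = φ (exp N * T * exp N) * exp L := by
  let : NormedAlgebra ℚ 𝔹 := .restrictScalars ℚ 𝕜 _
  have hsemi : Function.Semiconj φ ⇑(mul 𝕜 𝔸 N + (mul 𝕜 𝔸).flip N)
      ⇑(mul 𝕜 𝔹 L + (mul 𝕜 𝔹).flip (-L)) := fun S => by
    simpa [sub_eq_add_neg] using h S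
  have hconj := map_exp_apply_of_semiconj φ hsemi T
  rw [exp_mul_add_flip_mul_apply, exp_mul_add_flip_mul_apply] at hconj
  rw [hconj, mul_assoc, ← exp_add_of_commute (Commute.refl L).neg_left, neg_add_cancel,
    exp_zero, mul_one]

end NormedSpace

namespace ContinuousLinearMap

variable {𝕜 R : Type*} [NontriviallyNormedField 𝕜] [SeminormedRing R] [NormedAlgebra 𝕜 R]

theorem commute_mulLeftRight {a b a' b' : R} (ha : a * a' + a' * a = 0)
    (hb : b * b' + b' * b = 0) : Commute (mulLeftRight 𝕜 R a b) (mulLeftRight 𝕜 R a' b') := by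
  ext ρ
  simp only [mul_apply_eq_comp, mulLeftRight_apply]
  calc a * (a' * ρ * b') * b = (a * a') * ρ * (b' * b) := by noncomm_ring
    _ = (a' * a) * ρ * (b * b') := by
      rw [eq_neg_of_add_eq_zero_left ha, eq_neg_of_add_eq_zero_right hb]; noncomm_ring
    _ = a' * (a * ρ * b) * b' := by noncomm_ring

end ContinuousLinearMap

section CAR

open ContinuousLinearMap

variable {F : Type*} [NormedAddCommGroup F] [InnerProductSpace ℂ F] [FiniteDimensional ℂ F]
  {n : ℕ} (c : Fin n → F →L[ℂ] F)

theorem ghat_apply (S : Matrix (Fin n) (Fin n) ℂ) (ρ : F →L[ℂ] F) :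
    Ghat c S ρ = ∑ j, ∑ k, S j k • (adjoint (c j) * ρ * c k) := by
  simp [Ghat, mulLeftRight_apply]

theorem ghat_add (A B : Matrix (Fin n) (Fin n) ℂ) : Ghat c (A + B) = Ghat c A + Ghat c B := by
  simp [Ghat, add_smul, Finset.sum_add_distrib]

theorem ghat_smul (a : ℂ) (A : Matrix (Fin n) (Fin n) ℂ) : Ghat c (a • A) = a • Ghat c A := by
  simp [Ghat, smul_smul, Finset.smul_sum]

noncomputable def ghatCLM :
    Matrix (Fin n) (Fin n) ℂ →L[ℂ] (F →L[ℂ] F) →L[ℂ] F →L[ℂ] F :=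
  LinearMap.toContinuousLinearMap
    { toFun := Ghat c, map_add' := ghat_add c, map_smul' := ghat_smul c }

theorem quadOp_mul_adjoint_sub
    (hcd : ∀ j k, c j * adjoint (c k) + adjoint (c k) * c j = if j = k then 1 else 0)
    (hdd : ∀ j k, adjoint (c j) * adjoint (c k) + adjoint (c k) * adjoint (c j) = 0)
    (A : Matrix (Fin n) (Fin n) ℂ) (j : Fin n) :
    quadOp c A * adjoint (c j) - adjoint (c j) * quadOp c A = ∑ l, A l j • adjoint (c l) := by
  have key : ∀ l m, adjoint (c l) * c m * adjoint (c j) - adjoint (c j) * (adjoint (c l) * c m)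
      = if m = j then adjoint (c l) else 0 := by
    intro l m
    calc _ = adjoint (c l) * (c m * adjoint (c j) + adjoint (c j) * c m)
          - (adjoint (c l) * adjoint (c j) + adjoint (c j) * adjoint (c l)) * c m := by
          noncomm_ring
      _ = _ := by simp [hcd, hdd]
  simp only [quadOp, Finset.sum_mul, Finset.mul_sum, smul_mul_assoc, mul_smul_comm,
    ← Finset.sum_sub_distrib, ← smul_sub, key]
  simp

theorem mul_quadOp_sub
    (hcc : ∀ j k, c j * c k + c k * c j = 0)
    (hcd : ∀ j k, c j * adjoint (c k) + adjoint (c k) * c j = if j = k then 1 else 0)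
    (A : Matrix (Fin n) (Fin n) ℂ) (k : Fin n) :
    c k * quadOp c A - quadOp c A * c k = ∑ m, A k m • c m := by
  have key : ∀ l m, c k * (adjoint (c l) * c m) - adjoint (c l) * c m * c k
      = if k = l then c m else 0 := by
    intro l m
    calc _ = (c k * adjoint (c l) + adjoint (c l) * c k) * c m
          - adjoint (c l) * (c k * c m + c m * c k) := by
          noncomm_ring
      _ = _ := by simp [hcd, hcc]
  simp only [quadOp, Finset.sum_mul, Finset.mul_sum, smul_mul_assoc, mul_smul_comm,
    ← Finset.sum_sub_distrib, ← smul_sub, key]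
  simp

theorem fhat_mul_ghat_sub
    (hcd : ∀ j k, c j * adjoint (c k) + adjoint (c k) * c j = if j = k then 1 else 0)
    (hdd : ∀ j k, adjoint (c j) * adjoint (c k) + adjoint (c k) * adjoint (c j) = 0)
    (A S : Matrix (Fin n) (Fin n) ℂ) :
    Fhat c A * Ghat c S - Ghat c S * Fhat c A = Ghat c (A * S) := by
  ext1 ρ
  calc (Fhat c A * Ghat c S - Ghat c S * Fhat c A) ρ
      = ∑ j, ∑ k, S j k •
          ((quadOp c A * adjoint (c j) - adjoint (c j) * quadOp c A) * ρ * c k) := by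
        simp only [sub_apply, mul_apply_eq_comp, Fhat, mul_apply', ghat_apply, Finset.mul_sum,
          mul_smul_comm, ← Finset.sum_sub_distrib, ← smul_sub, sub_mul, mul_assoc]
    _ = ∑ l, ∑ k, ∑ j, (A l j * S j k) • (adjoint (c l) * ρ * c k) := by
        simp only [quadOp_mul_adjoint_sub c hcd hdd, Finset.sum_mul, smul_mul_assoc,
          Finset.smul_sum, smul_smul]
        rw [Finset.sum_comm]
        conv_rhs => rw [Finset.sum_comm]
        refine Finset.sum_congr rfl fun k _ => ?_
        rw [Finset.sum_comm]
        simp only [mul_comm]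
    _ = Ghat c (A * S) ρ := by
        simp [ghat_apply, Matrix.mul_apply, Finset.sum_smul]

theorem bhat_mul_ghat_sub
    (hcc : ∀ j k, c j * c k + c k * c j = 0)
    (hcd : ∀ j k, c j * adjoint (c k) + adjoint (c k) * c j = if j = k then 1 else 0)
    (A S : Matrix (Fin n) (Fin n) ℂ) :
    Bhat c A * Ghat c S - Ghat c S * Bhat c A = Ghat c (S * A) := by
  ext1 ρ
  calc (Bhat c A * Ghat c S - Ghat c S * Bhat c A) ρ
      = ∑ j, ∑ k, S j k • (adjoint (c j) * ρ * (c k * quadOp c A - quadOp c A * c k)) := by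
        simp only [sub_apply, mul_apply_eq_comp, Bhat, mulLeftRight_apply, one_mul, ghat_apply,
          Finset.sum_mul, smul_mul_assoc, ← Finset.sum_sub_distrib, ← smul_sub, mul_sub,
          mul_assoc]
    _ = ∑ j, ∑ m, ∑ k, (S j k * A k m) • (adjoint (c j) * ρ * c m) := by
        simp only [mul_quadOp_sub c hcc hcd, Finset.mul_sum, mul_smul_comm, Finset.smul_sum,
          smul_smul]
        exact Finset.sum_congr rfl fun j _ => Finset.sum_comm
    _ = Ghat c (S * A) ρ := by
        simp [ghat_apply, Matrix.mul_apply, Finset.sum_smul]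

theorem commute_ghat
    (hcc : ∀ j k, c j * c k + c k * c j = 0)
    (hdd : ∀ j k, adjoint (c j) * adjoint (c k) + adjoint (c k) * adjoint (c j) = 0)
    (A S : Matrix (Fin n) (Fin n) ℂ) : Commute (Ghat c A) (Ghat c S) :=
  .sum_left _ _ _ fun j _ => .sum_left _ _ _ fun k _ =>
    .sum_right _ _ _ fun l _ => .sum_right _ _ _ fun m _ =>
      ((commute_mulLeftRight (hdd j l) (hcc k m)).smul_left _).smul_right _

theorem liou_mul_ghat_sub
    (hcc : ∀ j k, c j * c k + c k * c j = 0)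
    (hcd : ∀ j k, c j * adjoint (c k) + adjoint (c k) * c j = if j = k then 1 else 0)
    (hdd : ∀ j k, adjoint (c j) * adjoint (c k) + adjoint (c k) * adjoint (c j) = 0)
    {A M : Matrix (Fin n) (Fin n) ℂ} (h : -A - Aᴴ - M = 0) (S : Matrix (Fin n) (Fin n) ℂ) :
    Liou c A M * Ghat c S - Ghat c S * Liou c A M = Ghat c ((A + M) * S + S * (Aᴴ + M)) := by
  have hL : Lhat c (0 : Matrix (Fin n) (Fin n) ℂ) = 0 := by simp [Lhat]
  have hG := (commute_ghat c hcc hdd M S).eq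
  have hτ : (M.trace • 1 : (F →L[ℂ] F) →L[ℂ] F →L[ℂ] F) * Ghat c S
      = Ghat c S * M.trace • 1 := by
    rw [← Algebra.algebraMap_eq_smul_one]
    exact Algebra.commutes _ _
  rw [Liou, h, hL, ghat_add, ← fhat_mul_ghat_sub c hcd hdd, ← bhat_mul_ghat_sub c hcc hcd]
  simp only [add_mul, mul_add, sub_mul, mul_sub, zero_mul, mul_zero, hG, hτ]
  abel

end CAR

theorem stmt14_general {n : ℕ}
    {F : Type*} [NormedAddCommGroup F] [InnerProductSpace ℂ F] [FiniteDimensional ℂ F]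
    (c : Fin n → F →L[ℂ] F)
    (hcc : ∀ j k, c j * c k + c k * c j = 0)
    (hcd : ∀ j k, c j * ContinuousLinearMap.adjoint (c k)
      + ContinuousLinearMap.adjoint (c k) * c j = if j = k then 1 else 0)
    (hdd : ∀ j k, ContinuousLinearMap.adjoint (c j) * ContinuousLinearMap.adjoint (c k)
      + ContinuousLinearMap.adjoint (c k) * ContinuousLinearMap.adjoint (c j) = 0)
    (M T : Matrix (Fin n) (Fin n) ℂ) (hM : M.IsHermitian)
    (t : ℝ) :
    superExp ((t : ℂ) • Liou c (-((2⁻¹ : ℂ) • M)) M) * Ghat c T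
      = Ghat c (NormedSpace.exp (((t : ℂ) / 2) • M) * T
            * NormedSpace.exp (((t : ℂ) / 2) • M))
        * superExp ((t : ℂ) • Liou c (-((2⁻¹ : ℂ) • M)) M) := by
  set A : Matrix (Fin n) (Fin n) ℂ := -((2⁻¹ : ℂ) • M)
  have hA : Aᴴ = A := by simp [A, hM.eq]
  have hAM : A + M = (2⁻¹ : ℂ) • M := by simp only [A]; module
  have hLin : -A - Aᴴ - M = 0 := by rw [hA]; simp only [A]; module
  refine NormedSpace.exp_mul_map_eq_map_mul_exp (𝕜 := ℂ) (ghatCLM c) (N := ((t : ℂ) / 2) • M)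
    (L := (t : ℂ) • Liou c A M) (fun S => ?_) T
  calc Ghat c (((t : ℂ) / 2) • M * S + S * (((t : ℂ) / 2) • M))
      = (t : ℂ) • Ghat c ((A + M) * S + S * (Aᴴ + M)) := by
        rw [hA, hAM, ← ghat_smul]
        congr 1
        simp only [Matrix.smul_mul, Matrix.mul_smul, smul_add, smul_smul, div_eq_mul_inv]
    _ = (t : ℂ) • Liou c A M * Ghat c S - Ghat c S * ((t : ℂ) • Liou c A M) := by
        rw [← liou_mul_ghat_sub c hcc hcd hdd hLin]
        simp only [ContinuousLinearMap.mul_def, ContinuousLinearMap.smul_comp,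
          ContinuousLinearMap.comp_smul, smul_sub]

/-- for Hermitian `M`, `T` and `t ≥ 0`,
`exp(t·L(−M/2, M)) ∘ Ĝ(T) = Ĝ(e^{tM/2} T e^{tM/2}) ∘ exp(t·L(−M/2, M))`. -/
theorem stmt14 {n : ℕ} (hn : 0 < n)
    {F : Type*} [NormedAddCommGroup F] [InnerProductSpace ℂ F] [FiniteDimensional ℂ F]
    (c : Fin n → F →L[ℂ] F)
    (hcc : ∀ j k, c j * c k + c k * c j = 0)
    (hcd : ∀ j k, c j * ContinuousLinearMap.adjoint (c k)
      + ContinuousLinearMap.adjoint (c k) * c j = if j = k then 1 else 0)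
    (hdd : ∀ j k, ContinuousLinearMap.adjoint (c j) * ContinuousLinearMap.adjoint (c k)
      + ContinuousLinearMap.adjoint (c k) * ContinuousLinearMap.adjoint (c j) = 0)
    (M T : Matrix (Fin n) (Fin n) ℂ) (hM : M.IsHermitian) (hT : T.IsHermitian)
    (t : ℝ) (ht : 0 ≤ t) :
    superExp ((t : ℂ) • Liou c (-((2⁻¹ : ℂ) • M)) M) * Ghat c T
      = Ghat c (NormedSpace.exp (((t : ℂ) / 2) • M) * T
            * NormedSpace.exp (((t : ℂ) / 2) • M))
        * superExp ((t : ℂ) • Liou c (-((2⁻¹ : ℂ) • M)) M) :=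
  stmt14_general c hcc hcd hdd M T hM t
end

section
/- Let γ > λ > 0 be reals, let K be the complex n×n matrix with entries K_{jk} = (γ+λ)δ_{j,k+1} − (γ−λ)δ_{j+1,k}, let 𝔾 be the Hermitian matrix with entries 𝔾_{jk} = i δ_{j,k+1} − i δ_{j+1,k}, let κ = √((γ−λ)/(γ+λ)), and let V(κ) be the invertible diagonal matrix with entries V(κ)_{jk} = κ^{j−1} δ_{jk}. Then V(κ) K V(κ)^{−1} = −i √(γ² − λ²) · 𝔾. -/
/-! Both `K` and `𝔾` have zero diagonal and constant sub- and superdiagonals. Conjugation by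
`diag(κ⁰, κ¹, …)` multiplies the subdiagonal by `κ` and the superdiagonal by `κ⁻¹`, and
`κ = √((γ−λ)/(γ+λ))` is exactly the value for which both products `κ(γ+λ)` and `(γ−λ)/κ`
become `√(γ²−λ²)`. -/

open scoped Matrix

/-- The Hatano–Nelson hopping matrix `K_{jk} = (γ+λ)δ_{j,k+1} − (γ−λ)δ_{j+1,k}`. -/
noncomputable def hnK (n : ℕ) (γ lam : ℝ) : Matrix (Fin n) (Fin n) ℂ :=
  Matrix.of fun j k =>
    ((γ + lam : ℝ) : ℂ) * (if (j : ℕ) = (k : ℕ) + 1 then 1 else 0)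
      - ((γ - lam : ℝ) : ℂ) * (if (j : ℕ) + 1 = (k : ℕ) then 1 else 0)

/-- The Hermitian matrix `𝔾_{jk} = i δ_{j,k+1} − i δ_{j+1,k}`. -/
noncomputable def hnG (n : ℕ) : Matrix (Fin n) (Fin n) ℂ :=
  Matrix.of fun j k =>
    Complex.I * (if (j : ℕ) = (k : ℕ) + 1 then 1 else 0)
      - Complex.I * (if (j : ℕ) + 1 = (k : ℕ) then 1 else 0)

/-- The diagonal matrix `V(κ)_{jk} = κ^{j−1} δ_{jk}` (indices `j = 1, …, n`). -/
noncomputable def hnV (n : ℕ) (κ : ℝ) : Matrix (Fin n) (Fin n) ℂ :=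
  Matrix.diagonal fun j => ((κ : ℂ) ^ (j : ℕ))

namespace Matrix

variable {ι 𝕜 : Type*} [Fintype ι] [DecidableEq ι] [Field 𝕜]

theorem inv_diagonal_of_ne_zero {d : ι → 𝕜} (hd : ∀ i, d i ≠ 0) :
    (diagonal d)⁻¹ = diagonal d⁻¹ := by
  refine inv_eq_right_inv ?_
  rw [diagonal_mul_diagonal, ← diagonal_one]
  exact congrArg diagonal (funext fun i => mul_inv_cancel₀ (hd i))

theorem diagonal_mul_mul_inv_diagonal_apply {d : ι → 𝕜} (hd : ∀ i, d i ≠ 0) (A : Matrix ι ι 𝕜)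
    (i j : ι) : (diagonal d * A * (diagonal d)⁻¹) i j = d i * A i j * (d j)⁻¹ := by
  rw [inv_diagonal_of_ne_zero hd, mul_diagonal, diagonal_mul, Pi.inv_apply]

end Matrix

def hoppingMatrix {R : Type*} [Semiring R] (n : ℕ) (a b : R) : Matrix (Fin n) (Fin n) R :=
  Matrix.of fun j k =>
    a * (if (j : ℕ) = (k : ℕ) + 1 then 1 else 0) + b * (if (j : ℕ) + 1 = (k : ℕ) then 1 else 0)

theorem smul_hoppingMatrix {R : Type*} [CommSemiring R] (n : ℕ) (c a b : R) :
    c • hoppingMatrix n a b = hoppingMatrix n (c * a) (c * b) := by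
  ext j k
  simp only [hoppingMatrix, Matrix.smul_apply, Matrix.of_apply, smul_eq_mul]
  ring

theorem diagonal_pow_mul_hoppingMatrix_mul_inv {𝕜 : Type*} [Field 𝕜] (n : ℕ) {c : 𝕜} (hc : c ≠ 0)
    (a b : 𝕜) :
    Matrix.diagonal (fun j : Fin n => c ^ (j : ℕ)) * hoppingMatrix n a b
        * (Matrix.diagonal fun j : Fin n => c ^ (j : ℕ))⁻¹
      = hoppingMatrix n (c * a) (c⁻¹ * b) := by
  ext j k
  rw [Matrix.diagonal_mul_mul_inv_diagonal_apply fun j => pow_ne_zero _ hc]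
  simp only [hoppingMatrix, Matrix.of_apply]
  split_ifs with hsub hsup hsup
  · omega
  · rw [hsub, pow_succ]; field_simp; ring
  · rw [← hsup, pow_succ]; field_simp; ring
  · ring

theorem hnK_eq_hoppingMatrix (n : ℕ) (γ lam : ℝ) :
    hnK n γ lam = hoppingMatrix n ((γ + lam : ℝ) : ℂ) (-((γ - lam : ℝ) : ℂ)) := by
  ext j k
  simp only [hnK, hoppingMatrix, Matrix.of_apply]
  ring

theorem hnG_eq_hoppingMatrix (n : ℕ) : hnG n = hoppingMatrix n Complex.I (-Complex.I) := by
  ext j k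
  simp only [hnG, hoppingMatrix, Matrix.of_apply]
  ring

theorem Real.sqrt_div_mul_self {a b : ℝ} (hb : 0 ≤ b) : √(a / b) * b = √(a * b) := by
  rw [← Real.sqrt_sq hb, ← Real.sqrt_mul' _ (sq_nonneg b), Real.sqrt_sq hb]
  rcases hb.eq_or_lt with rfl | hb
  · simp
  · congr 1; field_simp

theorem Real.div_sqrt_div {a b : ℝ} (ha : 0 ≤ a) : a / √(a / b) = √(a * b) := by
  rcases ha.eq_or_lt with rfl | ha
  · simp
  have hsa : √a ≠ 0 := (Real.sqrt_pos.mpr ha).ne'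
  rw [Real.sqrt_div ha.le, div_div_eq_mul_div, Real.sqrt_mul ha.le, div_eq_iff hsa, mul_right_comm,
    Real.mul_self_sqrt ha.le]

theorem stmt17_general {n : ℕ} (γ lam : ℝ) (hgl : lam < γ) (hlam : 0 < lam) :
    hnV n (Real.sqrt ((γ - lam) / (γ + lam))) * hnK n γ lam
        * (hnV n (Real.sqrt ((γ - lam) / (γ + lam))))⁻¹
      = (-Complex.I * (Real.sqrt (γ ^ 2 - lam ^ 2) : ℝ)) • hnG n := by
  set κ := √((γ - lam) / (γ + lam))
  have hκ : (κ : ℂ) ≠ 0 := by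
    exact_mod_cast (Real.sqrt_pos.mpr (div_pos (by linarith) (by linarith))).ne'
  have hsq : γ ^ 2 - lam ^ 2 = (γ - lam) * (γ + lam) := by ring
  have hleft : κ * (γ + lam) = √(γ ^ 2 - lam ^ 2) := by
    rw [hsq, Real.sqrt_div_mul_self (by linarith)]
  have hright : (γ - lam) / κ = √(γ ^ 2 - lam ^ 2) := by
    rw [hsq, Real.div_sqrt_div (by linarith)]
  rw [hnK_eq_hoppingMatrix, hnG_eq_hoppingMatrix, hnV,
    diagonal_pow_mul_hoppingMatrix_mul_inv n hκ, smul_hoppingMatrix]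
  congr 1
  · rw [← hleft]; push_cast
    linear_combination ((κ : ℂ) * (γ + lam)) * Complex.I_mul_I
  · rw [← hright]; push_cast
    linear_combination (-((γ - lam) / κ : ℂ)) * Complex.I_mul_I

/-- for `γ > λ > 0` and `κ = √((γ−λ)/(γ+λ))`,
`V(κ) K V(κ)⁻¹ = −i √(γ² − λ²) 𝔾`. -/
theorem stmt17 {n : ℕ} (hn : 0 < n) (γ lam : ℝ) (hgl : lam < γ) (hlam : 0 < lam) :
    hnV n (Real.sqrt ((γ - lam) / (γ + lam))) * hnK n γ lam
        * (hnV n (Real.sqrt ((γ - lam) / (γ + lam))))⁻¹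
      = (-Complex.I * (Real.sqrt (γ ^ 2 - lam ^ 2) : ℝ)) • hnG n :=
  stmt17_general γ lam hgl hlam
end

section
/- Let ω ∈ ℝ, γ > λ > 0, a > 2 and x > 0 be reals. Let K, 𝔾, κ, V(κ) be as follows: K_{jk} = (γ+λ)δ_{j,k+1} − (γ−λ)δ_{j+1,k}; 𝔾_{jk} = i δ_{j,k+1} − i δ_{j+1,k}; κ = √((γ−λ)/(γ+λ)); V(κ)_{jk} = κ^{j−1} δ_{jk}. Set H_nH = (ω − iaγ)I + K and X = x·V(κ)^{−2}. Then i(H_nH X − X H_nH†) = x · V(κ)^{−1} (2aγ I + 2√(γ² − λ²) 𝔾) V(κ)^{−1}, and this matrix is positive semidefinite. -/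
open scoped Matrix

set_option maxRecDepth 4000

lemma sum_ite_fin (n A : ℕ) (c : ℂ) :
    (∑ m : Fin n, if (m : ℕ) = A then c else 0) = if A < n then c else 0 := by
  rw [Fin.sum_univ_eq_sum_range (fun m => if m = A then c else 0) n,
    Finset.sum_ite_eq' (Finset.range n) A (fun _ => c)]
  simp [Finset.mem_range]

lemma sum_ite_ite (n A B : ℕ) (c d : ℂ) :
    (∑ m : Fin n, (if (m : ℕ) = A then c else 0) * (if (m : ℕ) = B then d else 0))
      = if A = B ∧ A < n then c * d else 0 := by
  have h : ∀ m : Fin n, (if (m : ℕ) = A then c else 0) * (if (m : ℕ) = B then d else 0)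
      = if (m : ℕ) = A then (if A = B then c * d else 0) else 0 := by
    intro m
    split_ifs <;> simp_all
  rw [Finset.sum_congr rfl (fun m _ => h m), sum_ite_fin]
  split_ifs <;> simp_all <;> omega


open scoped ComplexOrder

set_option maxHeartbeats 2000000 in
/-- with `H_nH = (ω − iaγ)I + K` and `X = x·V(κ)⁻²`,
`i(H_nH X − X H_nH†) = x·V(κ)⁻¹ (2aγ I + 2√(γ²−λ²) 𝔾) V(κ)⁻¹`, and this matrix is
positive semidefinite. -/
theorem stmt18 {n : ℕ} (hn : 0 < n) (ω γ lam a x : ℝ)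
    (hgl : lam < γ) (hlam : 0 < lam) (ha : 2 < a) (hx : 0 < x) :
    Complex.I •
        (((ω : ℂ) - Complex.I * a * γ) • (1 : Matrix (Fin n) (Fin n) ℂ) + hnK n γ lam)
            * ((x : ℂ) • ((hnV n (Real.sqrt ((γ - lam) / (γ + lam))))⁻¹
                * (hnV n (Real.sqrt ((γ - lam) / (γ + lam))))⁻¹))
          - Complex.I •
            ((x : ℂ) • ((hnV n (Real.sqrt ((γ - lam) / (γ + lam))))⁻¹
                * (hnV n (Real.sqrt ((γ - lam) / (γ + lam))))⁻¹))
            * (((ω : ℂ) - Complex.I * a * γ) • (1 : Matrix (Fin n) (Fin n) ℂ)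
                + hnK n γ lam)ᴴ
      = (x : ℂ) • ((hnV n (Real.sqrt ((γ - lam) / (γ + lam))))⁻¹
          * ((2 * a * γ : ℝ) • (1 : Matrix (Fin n) (Fin n) ℂ)
              + (2 * Real.sqrt (γ ^ 2 - lam ^ 2) : ℝ) • hnG n)
          * (hnV n (Real.sqrt ((γ - lam) / (γ + lam))))⁻¹) ∧
    ((x : ℂ) • ((hnV n (Real.sqrt ((γ - lam) / (γ + lam))))⁻¹
          * ((2 * a * γ : ℝ) • (1 : Matrix (Fin n) (Fin n) ℂ)
              + (2 * Real.sqrt (γ ^ 2 - lam ^ 2) : ℝ) • hnG n)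
          * (hnV n (Real.sqrt ((γ - lam) / (γ + lam))))⁻¹)).PosSemidef := by
  set κ : ℝ := Real.sqrt ((γ - lam) / (γ + lam)) with hκdef
  set s : ℝ := Real.sqrt (γ ^ 2 - lam ^ 2) with hsdef
  have hgpl : (0:ℝ) < γ + lam := by linarith
  have hgml : (0:ℝ) < γ - lam := by linarith
  have hκpos : 0 < κ := Real.sqrt_pos.mpr (div_pos hgml hgpl)
  have hκ2 : κ ^ 2 = (γ - lam) / (γ + lam) := Real.sq_sqrt (le_of_lt (div_pos hgml hgpl))
  have hs : s = (γ + lam) * κ := by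
    rw [hsdef, show γ ^ 2 - lam ^ 2 = (γ + lam) ^ 2 * ((γ - lam) / (γ + lam)) by
      field_simp; ring, Real.sqrt_mul (sq_nonneg _), Real.sqrt_sq hgpl.le]
  have hspos : 0 < s := by rw [hs]; positivity
  have hslγ : s ≤ γ := by
    rw [hsdef]
    calc Real.sqrt (γ ^ 2 - lam ^ 2) ≤ Real.sqrt (γ ^ 2) := by
          apply Real.sqrt_le_sqrt; nlinarith
      _ = γ := Real.sqrt_sq (by linarith)
  -- complex versions
  have hκC : ((κ:ℂ)) ≠ 0 := by
    simpa using Complex.ofReal_ne_zero.mpr (ne_of_gt hκpos)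
  have hκ2C : ((κ:ℂ)) ^ 2 * ((γ:ℂ) + lam) = (γ:ℂ) - lam := by
    have := hκ2
    have h2 : ((κ ^ 2 : ℝ) : ℂ) = (((γ - lam) / (γ + lam) : ℝ) : ℂ) := congrArg _ this
    push_cast at h2
    rw [h2]
    rw [div_mul_cancel₀]
    exact_mod_cast ne_of_gt hgpl
  have hsC : ((s:ℂ)) = ((γ:ℂ) + lam) * κ := by exact_mod_cast congrArg Complex.ofReal hs
  -- the inverse of V
  set dI : Fin n → ℂ := fun j => ((κ:ℂ) ^ (j : ℕ))⁻¹ with hdI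
  set W : Matrix (Fin n) (Fin n) ℂ := Matrix.diagonal dI with hWdef
  have hW : (hnV n κ)⁻¹ = W := by
    apply Matrix.inv_eq_left_inv
    rw [hnV, hWdef, Matrix.diagonal_mul_diagonal,
      show (fun j : Fin n => dI j * (κ:ℂ) ^ (j:ℕ)) = fun _ => 1 from
        funext fun j => inv_mul_cancel₀ (pow_ne_zero (j:ℕ) hκC),
      Matrix.diagonal_one]
  rw [hW]
  set N : Matrix (Fin n) (Fin n) ℂ :=
    (2 * a * γ : ℝ) • (1 : Matrix (Fin n) (Fin n) ℂ) + (2 * s : ℝ) • hnG n with hN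
  constructor
  · -- the equality
    ext j k
    rcases eq_or_ne ((j:ℕ)) ((k:ℕ)) with h0 | h0
    · obtain rfl : j = k := Fin.ext h0
      have h1 : ¬((j:ℕ) = (j:ℕ)+1) := by omega
      have h2 : ¬((j:ℕ)+1 = (j:ℕ)) := by omega
      simp only [hWdef, Matrix.diagonal_mul_diagonal, Matrix.smul_mul, Matrix.mul_smul,
        Matrix.sub_apply, Matrix.smul_apply, Matrix.add_mul, Matrix.mul_add,
        Matrix.conjTranspose_add, Matrix.conjTranspose_smul, Matrix.conjTranspose_one,
        Matrix.mul_diagonal, Matrix.diagonal_mul, Matrix.add_apply, Matrix.one_apply,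
        Matrix.smul_mul, hnK, hnG, hN, Matrix.of_apply, Matrix.conjTranspose_apply, smul_eq_mul,
        star_sub, star_mul', star_one, star_zero, Complex.star_def, apply_ite, map_sub, map_mul,
        map_add, Complex.conj_ofReal, Complex.conj_I, map_one, Complex.real_smul,
        Complex.ofReal_mul, Complex.ofReal_ofNat, Complex.ofReal_sub, Complex.ofReal_add, pow_succ, h1, h2, if_pos rfl, if_true, if_false, if_neg]
      linear_combination (-2*(a:ℂ)*(γ:ℂ)*(x:ℂ)*(dI j * dI j)) * Complex.I_sq
    · have hne : j ≠ k := fun h => h0 (by rw [h])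
      have ht : ((κ:ℂ)) ^ (k:ℕ) ≠ 0 := pow_ne_zero _ hκC
      have htj : ((κ:ℂ)) ^ (j:ℕ) ≠ 0 := pow_ne_zero _ hκC
      by_cases h1 : (j:ℕ) = (k:ℕ)+1
      · have h2 : ¬((j:ℕ)+1 = (k:ℕ)) := by omega
        have h3 : ¬((k:ℕ)+1+1 = (k:ℕ)) := by omega
        have h4 : ¬((k:ℕ) = (k:ℕ)+1+1) := by omega
        simp only [hWdef, Matrix.diagonal_mul_diagonal, Matrix.smul_mul, Matrix.mul_smul,
        Matrix.sub_apply, Matrix.smul_apply, Matrix.add_mul, Matrix.mul_add,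
        Matrix.conjTranspose_add, Matrix.conjTranspose_smul, Matrix.conjTranspose_one,
        Matrix.mul_diagonal, Matrix.diagonal_mul, Matrix.add_apply, Matrix.one_apply,
        Matrix.smul_mul, hnK, hnG, hN, Matrix.of_apply, Matrix.conjTranspose_apply, smul_eq_mul,
        star_sub, star_mul', star_one, star_zero, Complex.star_def, apply_ite, map_sub, map_mul,
        map_add, Complex.conj_ofReal, Complex.conj_I, map_one, Complex.real_smul,
        Complex.ofReal_mul, Complex.ofReal_ofNat, Complex.ofReal_sub, Complex.ofReal_add, pow_succ, h1, h2, h3, h4, hne, if_pos rfl, if_true, if_false, if_neg, hdI]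
        rw [hsC, ← hκ2C]
        field_simp
        ring
      · by_cases h2 : (j:ℕ)+1 = (k:ℕ)
        · have h3 : ¬((j:ℕ)+1+1 = (j:ℕ)) := by omega
          have h4 : ¬((j:ℕ) = (j:ℕ)+1+1) := by omega
          have h5 : ¬((k:ℕ)+1 = (j:ℕ)) := by omega
          have h6 : ((k:ℕ)) = (j:ℕ)+1 := h2.symm
          simp only [hWdef, Matrix.diagonal_mul_diagonal, Matrix.smul_mul, Matrix.mul_smul,
        Matrix.sub_apply, Matrix.smul_apply, Matrix.add_mul, Matrix.mul_add,
        Matrix.conjTranspose_add, Matrix.conjTranspose_smul, Matrix.conjTranspose_one,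
        Matrix.mul_diagonal, Matrix.diagonal_mul, Matrix.add_apply, Matrix.one_apply,
        Matrix.smul_mul, hnK, hnG, hN, Matrix.of_apply, Matrix.conjTranspose_apply, smul_eq_mul,
        star_sub, star_mul', star_one, star_zero, Complex.star_def, apply_ite, map_sub, map_mul,
        map_add, Complex.conj_ofReal, Complex.conj_I, map_one, Complex.real_smul,
        Complex.ofReal_mul, Complex.ofReal_ofNat, Complex.ofReal_sub, Complex.ofReal_add, pow_succ, h1, h3, h4, h5, h6, hne, if_pos rfl, if_true, if_false,
            if_neg, hdI]
          rw [hsC, ← hκ2C]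
          field_simp
          ring
        · have h5 : ¬((k:ℕ)+1 = (j:ℕ)) := by omega
          have h6 : ¬((k:ℕ) = (j:ℕ)+1) := by omega
          simp only [hWdef, Matrix.diagonal_mul_diagonal, Matrix.smul_mul, Matrix.mul_smul,
        Matrix.sub_apply, Matrix.smul_apply, Matrix.add_mul, Matrix.mul_add,
        Matrix.conjTranspose_add, Matrix.conjTranspose_smul, Matrix.conjTranspose_one,
        Matrix.mul_diagonal, Matrix.diagonal_mul, Matrix.add_apply, Matrix.one_apply,
        Matrix.smul_mul, hnK, hnG, hN, Matrix.of_apply, Matrix.conjTranspose_apply, smul_eq_mul,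
        star_sub, star_mul', star_one, star_zero, Complex.star_def, apply_ite, map_sub, map_mul,
        map_add, Complex.conj_ofReal, Complex.conj_I, map_one, Complex.real_smul,
        Complex.ofReal_mul, Complex.ofReal_ofNat, Complex.ofReal_sub, Complex.ofReal_add, pow_succ, h1, h2, h5, h6, hne, if_true, if_false, if_neg]
          ring
  · -- positive semidefiniteness
    have hγpos : (0:ℝ) < γ := by linarith
    have hWH : Wᴴ = W := by
      rw [hWdef, Matrix.diagonal_conjTranspose,
        show star dI = dI from funext fun j => by
          simp [hdI, ← Complex.ofReal_pow, ← Complex.ofReal_inv, Complex.conj_ofReal]]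
    set c0 : ℝ := Real.sqrt (2*s*x) with hc0
    have hc0sq : (c0:ℂ) * (c0:ℂ) = 2*(s:ℂ)*(x:ℂ) := by
      have h : c0 * c0 = 2*s*x := Real.mul_self_sqrt (by positivity)
      rw [← Complex.ofReal_mul, h]
      push_cast
      ring
    set B : Matrix (Fin n) (Fin n) ℂ := Matrix.of (fun m j =>
      (if (m:ℕ) = (j:ℕ) then (c0:ℂ) else 0)
        + (if (m:ℕ) = (j:ℕ)+1 then (c0:ℂ) * Complex.I else 0)) with hB
    set d0 : Fin n → ℂ := fun j =>
      ((2*a*γ*x - 2*s*x : ℝ) : ℂ) - (if (j:ℕ)+1 < n then ((2*s*x : ℝ) : ℂ) else 0) with hd0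
    have hd0nn : 0 ≤ d0 := by
      intro j
      have hb1 : (0:ℝ) ≤ 2*a*γ*x - 2*s*x - 2*s*x := by
        nlinarith [mul_le_mul_of_nonneg_right hslγ hx.le,
          mul_le_mul_of_nonneg_right ha.le (mul_pos hγpos hx).le]
      have hb2 : (0:ℝ) ≤ 2*a*γ*x - 2*s*x := by
        nlinarith [mul_le_mul_of_nonneg_right hslγ hx.le,
          mul_le_mul_of_nonneg_right ha.le (mul_pos hγpos hx).le]
      simp only [hd0, Pi.zero_apply]
      split_ifs
      · rw [← Complex.ofReal_sub]
        exact_mod_cast hb1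
      · rw [sub_zero]
        exact_mod_cast hb2
    have key : (x:ℂ) • N = Bᴴ * B + Matrix.diagonal d0 := by
      ext j k
      rw [Matrix.add_apply, Matrix.mul_apply]
      have expand : ∀ m : Fin n, Bᴴ j m * B m k =
          (if (m:ℕ) = (j:ℕ) then (c0:ℂ) else 0) * (if (m:ℕ) = (k:ℕ) then (c0:ℂ) else 0)
        + (if (m:ℕ) = (j:ℕ) then (c0:ℂ) else 0)
            * (if (m:ℕ) = (k:ℕ)+1 then (c0:ℂ)*Complex.I else 0)
        + ((if (m:ℕ) = (j:ℕ)+1 then -((c0:ℂ)*Complex.I) else 0)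
            * (if (m:ℕ) = (k:ℕ) then (c0:ℂ) else 0)
        + (if (m:ℕ) = (j:ℕ)+1 then -((c0:ℂ)*Complex.I) else 0)
            * (if (m:ℕ) = (k:ℕ)+1 then (c0:ℂ)*Complex.I else 0)) := by
        intro m
        rw [Matrix.conjTranspose_apply]
        simp only [hB, Matrix.of_apply]
        split_ifs <;> simp [Complex.conj_ofReal] <;> ring
      rw [Finset.sum_congr rfl (fun m _ => expand m), Finset.sum_add_distrib,
        Finset.sum_add_distrib, Finset.sum_add_distrib, sum_ite_ite, sum_ite_ite,
        sum_ite_ite, sum_ite_ite]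
      have hjlt : (j:ℕ) < n := j.isLt
      have hklt : (k:ℕ) < n := k.isLt
      rcases eq_or_ne ((j:ℕ)) ((k:ℕ)) with h0 | h0
      · obtain rfl : j = k := Fin.ext h0
        have h1 : ¬((j:ℕ) = (j:ℕ)+1) := by omega
        have h2 : ¬((j:ℕ)+1 = (j:ℕ)) := by omega
        by_cases hb : (j:ℕ)+1 < n
        · simp only [hN, Matrix.smul_apply, Matrix.add_apply, Matrix.smul_apply,
            Matrix.one_apply, hnG, Matrix.of_apply, Matrix.diagonal_apply_eq, hd0,
            h1, h2, hjlt, hb, if_pos rfl, if_true, if_false, if_neg, and_true, and_false,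
            true_and, false_and, and_self, smul_eq_mul, Complex.real_smul,
            Complex.ofReal_mul, Complex.ofReal_ofNat, Complex.ofReal_sub, ite_true]
          linear_combination (-2:ℂ) * hc0sq + ((c0:ℂ)*(c0:ℂ)) * Complex.I_sq
        · simp only [hN, Matrix.smul_apply, Matrix.add_apply, Matrix.smul_apply,
            Matrix.one_apply, hnG, Matrix.of_apply, Matrix.diagonal_apply_eq, hd0,
            h1, h2, hjlt, hb, if_pos rfl, if_true, if_false, if_neg, and_true, and_false,
            true_and, false_and, and_self, smul_eq_mul, Complex.real_smul,
            Complex.ofReal_mul, Complex.ofReal_ofNat, Complex.ofReal_sub, ite_true]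
          linear_combination (-1:ℂ) * hc0sq
      · have hne : j ≠ k := fun h => h0 (by rw [h])
        have hdne : Matrix.diagonal d0 j k = 0 := Matrix.diagonal_apply_ne d0 hne
        by_cases h1 : (j:ℕ) = (k:ℕ)+1
        · have h2 : ¬((j:ℕ)+1 = (k:ℕ)) := by omega
          have h3 : ¬((j:ℕ)+1 = (k:ℕ)+1) := by omega
          have f1 : ¬((k:ℕ)+1+1 = (k:ℕ)) := by omega
          have f2 : ¬((k:ℕ)+1+1 = (k:ℕ)+1) := by omega
          have f3 : ¬((k:ℕ) = (k:ℕ)+1) := by omega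
          have f4 : ¬((k:ℕ) = (k:ℕ)+1+1) := by omega
          have f5 : ¬((k:ℕ)+1 = (k:ℕ)) := by omega
          have f6 : ((k:ℕ)+1 < n) := by omega
          simp only [hN, Matrix.smul_apply, Matrix.add_apply, Matrix.smul_apply,
            Matrix.one_apply, hnG, Matrix.of_apply, hdne, h1, h2, h3, f1, f2, f3, f4, f5, f6,
            h0, hne, hjlt,
            if_pos rfl, if_true, if_false, if_neg, and_true, and_false, true_and,
            false_and, and_self, smul_eq_mul, Complex.real_smul, Complex.ofReal_mul,
            Complex.ofReal_ofNat, ite_true, ite_false]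
          linear_combination (-Complex.I) * hc0sq
        · by_cases h2 : (j:ℕ)+1 = (k:ℕ)
          · have h4 : ¬((j:ℕ)+1 = (k:ℕ)+1) := by omega
            have h5 : (j:ℕ)+1 < n := by omega
            have h6 : ((k:ℕ)) = (j:ℕ)+1 := h2.symm
            have f1 : ¬((j:ℕ) = (j:ℕ)+1) := by omega
            have f2 : ¬((j:ℕ) = (j:ℕ)+1+1) := by omega
            have f3 : ¬((j:ℕ)+1+1 = (j:ℕ)) := by omega
            have f4 : ¬((j:ℕ)+1 = (j:ℕ)) := by omega
            have f5 : ¬((j:ℕ)+1 = (j:ℕ)+1+1) := by omega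
            simp only [hN, Matrix.smul_apply, Matrix.add_apply, Matrix.smul_apply,
              Matrix.one_apply, hnG, Matrix.of_apply, hdne, h1, h6, f1, f2, f3, f4, f5,
              h5, h0, hne,
              if_pos rfl, if_true, if_false, if_neg, and_true, and_false, true_and,
              false_and, and_self, smul_eq_mul, Complex.real_smul, Complex.ofReal_mul,
              Complex.ofReal_ofNat, ite_true, ite_false]
            linear_combination Complex.I * hc0sq
          · have h3 : ¬((j:ℕ)+1 = (k:ℕ)+1) := by omega
            simp only [hN, Matrix.smul_apply, Matrix.add_apply, Matrix.smul_apply,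
              Matrix.one_apply, hnG, Matrix.of_apply, hdne, h1, h2, h3, h0, hne,
              if_pos rfl, if_true, if_false, if_neg, and_true, and_false, true_and,
              false_and, and_self, smul_eq_mul, Complex.real_smul, Complex.ofReal_mul,
              Complex.ofReal_ofNat, ite_true, ite_false]
            ring
    have hfin : (x:ℂ) • (W * N * W) = Wᴴ * (Bᴴ * B + Matrix.diagonal d0) * W := by
      rw [← key, hWH, mul_smul_comm, smul_mul_assoc]
    rw [hfin]
    exact ((Matrix.posSemidef_conjTranspose_mul_self B).add
      (Matrix.PosSemidef.diagonal hd0nn)).conjTranspose_mul_mul_same W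
end
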